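/- arXiv:1703.00603 — 3 statements merged into one kernel-verified Lean document; each statement's English description precedes it below -/
import Mathlib

section
/- If R is a field, then the universal Novikov field Λ (formal sums Σ aₖ T^{λₖ} with λₖ ∈ ℝ increasing to ∞) is a field: every nonzero element is invertible. -/
/-!
A nonzero Hahn series `x` over a field is `c T^a (1 - y)` with `0 < orderTop y`, and its inverse
`c⁻¹ T^(-a) ∑ yⁿ` has support in `-a + ⟨supp y⟩`, the translate of the additive monoid generated
by `supp y`. If `supp y` meets every half-line `(-∞, B]` in a finite set, then by archimedeanity
an element of `⟨supp y⟩` below `B` is a sum of boundedly many elements of the finite set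
`supp y ∩ (0, B]`, and there are only finitely many such sums.
-/

open HahnSeries Pointwise

theorem Set.Finite.setOf_multiset_card_le {α : Type*} {F : Set α} (hF : F.Finite) (N : ℕ) :
    {m : Multiset α | (∀ y ∈ m, y ∈ F) ∧ Multiset.card m ≤ N}.Finite := by
  classical
  refine (Multiset.powerset (N • hF.toFinset.val)).toFinset.finite_toSet.subset ?_
  rintro m ⟨hmF, hcard⟩
  simp only [Finset.mem_coe, Multiset.mem_toFinset, Multiset.mem_powerset]
  refine Multiset.le_iff_count.2 fun a => ?_
  by_cases ha : a ∈ m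
  · rw [Multiset.count_nsmul, Multiset.count_eq_one_of_mem hF.toFinset.nodup
      (hF.mem_toFinset.2 (hmF a ha)), mul_one]
    exact (Multiset.count_le_card a m).trans hcard
  · simp [Multiset.count_eq_zero.2 ha]

theorem Set.Finite.exists_card_le_of_sum_le {Γ : Type*} [AddCommMonoid Γ] [LinearOrder Γ]
    [IsOrderedCancelAddMonoid Γ] [Archimedean Γ] {F : Set Γ} (hF : F.Finite)
    (hpos : F ⊆ Set.Ioi 0) (B : Γ) :
    ∃ N : ℕ, ∀ m : Multiset Γ, (∀ y ∈ m, y ∈ F) → m.sum ≤ B → Multiset.card m ≤ N := by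
  rcases F.eq_empty_or_nonempty with rfl | hne
  · exact ⟨0, fun m hm _ => by simp [Multiset.eq_zero_of_forall_notMem fun y hy => hm y hy]⟩
  obtain ⟨ε, hεF, hεmin⟩ := F.exists_min_image id hF hne
  obtain ⟨N, hN⟩ := Archimedean.arch B (hpos hεF)
  refine ⟨N, fun m hmF hsum => ?_⟩
  rw [← nsmul_le_nsmul_iff_left (hpos hεF)]
  calc Multiset.card m • ε ≤ m.sum := Multiset.card_nsmul_le_sum fun y hy => hεmin y (hmF y hy)
    _ ≤ B := hsum
    _ ≤ N • ε := hN

namespace Set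

variable {Γ : Type*} [LinearOrder Γ]

def FiniteBelow (s : Set Γ) : Prop :=
  ∀ B, (s ∩ Iic B).Finite

variable {s t : Set Γ}

theorem FiniteBelow.mono (ht : t.FiniteBelow) (h : s ⊆ t) : s.FiniteBelow :=
  fun B => (ht B).subset (inter_subset_inter_left _ h)

theorem Finite.finiteBelow (hs : s.Finite) : s.FiniteBelow :=
  fun _ => hs.inter_of_left _

theorem FiniteBelow.union (hs : s.FiniteBelow) (ht : t.FiniteBelow) : (s ∪ t).FiniteBelow :=
  fun B => by simpa only [union_inter_distrib_right] using (hs B).union (ht B)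

theorem FiniteBelow.vadd [AddCommGroup Γ] [IsOrderedAddMonoid Γ] (hs : s.FiniteBelow) (a : Γ) :
    (a +ᵥ s).FiniteBelow := by
  intro B
  refine ((hs (B - a)).image (a + ·)).subset ?_
  rintro _ ⟨⟨t, ht, rfl⟩, hB⟩
  exact ⟨t, ⟨ht, le_sub_iff_add_le'.2 hB⟩, rfl⟩

theorem FiniteBelow.addSubmonoid_closure [AddCommMonoid Γ] [IsOrderedCancelAddMonoid Γ]
    [Archimedean Γ] (hs : s.FiniteBelow) (hpos : s ⊆ Ioi 0) :
    (AddSubmonoid.closure s : Set Γ).FiniteBelow := by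
  intro B
  obtain ⟨N, hN⟩ := (hs B).exists_card_le_of_sum_le (fun y hy => hpos hy.1) B
  refine (((hs B).setOf_multiset_card_le N).image Multiset.sum).subset ?_
  rintro x ⟨hx, hxB⟩
  obtain ⟨m, hms, rfl⟩ := AddSubmonoid.exists_multiset_of_mem_closure hx
  have hmF : ∀ y ∈ m, y ∈ s ∩ Iic B := fun y hy =>
    ⟨hms y hy, (Multiset.single_le_sum (fun z hz => (hpos (hms z hz)).le) y hy).trans hxB⟩
  exact ⟨m, ⟨hmF, hN m hmF hxB⟩, rfl⟩

end Set

namespace HahnSeries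

theorem support_single_mul_subset {Γ R : Type*} [AddCommMonoid Γ] [PartialOrder Γ]
    [IsOrderedCancelAddMonoid Γ] [NonUnitalNonAssocSemiring R] (a : Γ) (r : R)
    (x : HahnSeries Γ R) : (single a r * x).support ⊆ a +ᵥ x.support := by
  intro g hg
  obtain ⟨i, hi, j, hj, rfl⟩ := support_mul_subset hg
  rw [Set.mem_singleton_iff.1 (support_single_subset hi)]
  exact ⟨j, hj, rfl⟩

theorem support_hsum_powers_subset_closure {Γ R : Type*} [AddCommMonoid Γ] [LinearOrder Γ]
    [IsOrderedCancelAddMonoid Γ] [CommRing R] {x : HahnSeries Γ R} (hx : 0 < x.orderTop) :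
    (SummableFamily.powers x).hsum.support ⊆ AddSubmonoid.closure x.support := by
  intro g hg
  obtain ⟨_, ⟨n, rfl⟩, hn⟩ := SummableFamily.support_hsum_subset hg
  simp only [SummableFamily.powers_of_orderTop_pos hx] at hn
  exact SummableFamily.support_pow_subset_closure x n hn

variable {Γ R : Type*} [AddCommGroup Γ] [LinearOrder Γ] [IsOrderedAddMonoid Γ] [Field R]

theorem finiteBelow_support_inv [Archimedean Γ] {x : HahnSeries Γ R}
    (hx : x.support.FiniteBelow) : x⁻¹.support.FiniteBelow := by
  rcases eq_or_ne x 0 with rfl | hx0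
  · simpa using (Set.finite_empty (α := Γ)).finiteBelow
  set y := 1 - single (-x.order) x.leadingCoeff⁻¹ * x
  have hy : 0 < y.orderTop :=
    unit_aux x (inv_mul_cancel₀ (leadingCoeff_ne_zero.mpr hx0)) _ (neg_add_cancel _)
  have hypos : y.support ⊆ Set.Ioi 0 := fun g hg =>
    WithTop.coe_lt_coe.1 (hy.trans_le (orderTop_le_of_coeff_ne_zero hg))
  have hyfin : y.support.FiniteBelow :=
    ((Set.finite_singleton 0).finiteBelow.union (hx.vadd _)).mono <|
      (support_sub_subset _ _).trans <|
        Set.union_subset_union support_one.subset (support_single_mul_subset _ _ _)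
  refine ((hyfin.addSubmonoid_closure hypos).vadd (-x.order)).mono ?_
  rw [inv_def]
  exact (support_single_mul_subset _ _ _).trans
    (Set.vadd_set_mono (support_hsum_powers_subset_closure hy))

end HahnSeries

/-- If `R` is a field then the universal Novikov field `Λ`
(formal sums `Σ aₖ T^{λₖ}` with `λₖ ∈ ℝ` strictly increasing to `∞`, i.e.
Hahn series over `ℝ` whose support meets every half-line `(-∞, B]` in a
finite set) is a field: every nonzero element is invertible. -/
theorem novikov_field_is_field (R : Type*) [Field R]
    (S : Subring (HahnSeries ℝ R))
    (hS : (S : Set (HahnSeries ℝ R)) =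
      {f | ∀ B : ℝ, (f.support ∩ Set.Iic B).Finite}) :
    ∀ f : S, f ≠ 0 → ∃ g : S, f * g = 1 := by
  have hmem (x : HahnSeries ℝ R) : x ∈ S ↔ x.support.FiniteBelow := Set.ext_iff.mp hS x
  intro f hf
  have hf0 : (f : HahnSeries ℝ R) ≠ 0 := by exact_mod_cast hf
  exact ⟨⟨(f : HahnSeries ℝ R)⁻¹, (hmem _).2 (finiteBelow_support_inv ((hmem _).1 f.2))⟩,
    Subtype.ext (mul_inv_cancel₀ hf0)⟩
end

section
/- Let b, b' be bounding cochains of a filtered A∞ algebra, i.e. degree-1 elements with b ≡ 0 mod Λ₊ satisfying Σ_{k≥0} mₖ(b,…,b) = 0, and define the deformed operator m₁^{b,b'}(x) = Σ_{k,ℓ≥0} m_{k+ℓ+1}(b,…,b, x, b',…,b'). Then m₁^{b,b'} ∘ m₁^{b,b'} = 0. -/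
/-!
Apply the A∞ relation to the word `b, …, b, x, b', …, b'` (`k` copies of `b`, `l` of `b'`, with
`x` homogeneous) and sum over `k` and `l`. Each term `m(…, m_j(…), …)` is of one of three kinds:
the inner `m_j` reads only `b`s, reads `x`, or reads only `b'`s. Since `b` and `b'` have degree `1`,
the signs of the first two kinds are `+1`. Grouping the first kind by everything except `j` turns
it into insertions of `Σ_j m_j(b, …, b) = 0`; likewise the third kind vanishes by the Maurer–Cartan
equation for `b'`. The second kind is, after reindexing, exactly `m₁^{b,b'}(m₁^{b,b'} x)`. As
`m₁^{b,b'}` is linear and the `G d` span `C`, the homogeneous case suffices.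
-/

/-- The sign `(−1)^z` as an integer. -/
def sgn (z : ℤ) : ℤ := (((-1 : ℤˣ) ^ z : ℤˣ) : ℤ)

/-- The A∞ relations (formula (5.3) of the paper) for a family of `k`-ary
operations `m k` on a graded module: for every `n`, every sequence of
homogeneous inputs `x 0, …, x (n−1)` of (shifted) degrees `d 0, …, d (n−1)`,
`0 = Σ_{i + k₂ ≤ n} (−1)^{i + d 0 + ⋯ + d (i−1)}
      m_{n−k₂+1}(x 0, …, x (i−1), m_{k₂}(x i, …, x (i+k₂−1)), x (i+k₂), …)`. -/
def AInftyRel {R C : Type*} [CommRing R] [AddCommGroup C] [Module R C]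
    (G : ℤ → Submodule R C) (m : ∀ k : ℕ, (Fin k → C) → C) : Prop :=
  ∀ (n : ℕ) (d : ℕ → ℤ) (x : ℕ → C), (∀ j, x j ∈ G (d j)) →
    ∑ p ∈ Finset.range (n + 1) ×ˢ Finset.range (n + 1),
      (if p.1 + p.2 ≤ n then
        sgn ((p.1 : ℤ) + ∑ j ∈ Finset.range p.1, d j) •
          m (n - p.2 + 1) (fun j : Fin (n - p.2 + 1) =>
            if j.1 < p.1 then x j.1
            else if j.1 = p.1 then m p.2 (fun t : Fin p.2 => x (p.1 + t.1))
            else x (j.1 + p.2 - 1))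
       else 0) = 0

open Function Set

namespace AInfty

lemma sgn_add_two_mul (a c : ℤ) : sgn (a + 2 * c) = sgn a := by
  unfold sgn
  rw [zpow_add, zpow_mul, zpow_two]
  norm_num

lemma finsum_map_eq_zero_of_finsum_eq_zero {ι M M' F : Type*} [AddCommMonoid M]
    [AddCommMonoid M'] [FunLike F M M'] [AddMonoidHomClass F M M'] {f : ι → M}
    (hf : HasFiniteSupport f) (hsum : ∑ᶠ i, f i = 0) (φ : F) : ∑ᶠ i, φ (f i) = 0 := by
  rw [← map_finsum φ hf, hsum, map_zero]

lemma finsum_mem_image_prod_univ_eq_zero {α β ι M : Type*} [AddCommMonoid M] {f : ι → M}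
    (hf : HasFiniteSupport f) {e : α × β → ι} (he : Injective e) {S : Set α}
    (h : ∀ a ∈ S, ∑ᶠ k, f (e (a, k)) = 0) : ∑ᶠ z ∈ e '' (S ×ˢ univ), f z = 0 := by
  have hfe : HasFiniteSupport ((S ×ˢ univ).indicator fun w => f (e w)) :=
    (hf.preimage he.injOn).subset (by rw [support_indicator]; exact inter_subset_right)
  rw [finsum_mem_image he.injOn, finsum_mem_def, finsum_curry _ hfe]
  refine finsum_eq_zero_of_forall_eq_zero fun a => ?_
  by_cases ha : a ∈ S
  · simpa [indicator, ha] using h a ha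
  · simp [indicator, ha]

lemma finsum_eq_finsum_mem_add_add {ι M : Type*} [AddCommMonoid M] {f : ι → M}
    (hf : HasFiniteSupport f) {s t u : Set ι} (hst : Disjoint s t) (hsu : Disjoint s u)
    (htu : Disjoint t u) (h : support f ⊆ s ∪ t ∪ u) :
    ∑ᶠ i, f i = ∑ᶠ i ∈ s, f i + ∑ᶠ i ∈ t, f i + ∑ᶠ i ∈ u, f i := by
  have hfin : ∀ v : Set ι, (v ∩ support f).Finite := fun v => hf.subset inter_subset_right
  rw [← finsum_mem_union' hst (hfin s) (hfin t),
    ← finsum_mem_union' (disjoint_union_left.2 ⟨hsu, htu⟩) (hfin _) (hfin u), ← finsum_mem_univ]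
  exact finsum_mem_inter_support_eq _ _ _ (by rw [univ_inter, inter_eq_right.2 h])

section Words

variable {C : Type*}

def word (b b' y : C) (k t : ℕ) : C := if t < k then b else if t = k then y else b'

lemma word_eq_update (b b' y z : C) (k : ℕ) : word b b' y k = update (word b b' z k) k y := by
  funext t
  rcases eq_or_ne t k with rfl | h
  · simp [word]
  · simp [word, h]

/-- `contract μ w i k` is the sequence `w` with its entries `w i, …, w (i + k - 1)` replaced by
the single entry `μ k (w i, …, w (i + k - 1))`: the inputs of the nested term in the A∞ relation. -/
def contract (μ : ∀ k, (Fin k → C) → C) (w : ℕ → C) (i k j : ℕ) : C :=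
  if j < i then w j else if j = i then μ k (fun t => w (i + t)) else w (j + k - 1)

variable (μ : ∀ k, (Fin k → C) → C) (b b' y : C)

lemma contract_word_of_le {i K : ℕ} (h : i ≤ K) (k : ℕ) :
    contract μ (word b b' y (K + k)) i k = update (word b b' y (K + 1)) i (μ k fun _ => b) := by
  funext j
  rcases lt_trichotomy j i with hj | rfl | hj
  · simp [contract, word, hj, hj.ne, show j < K + k by omega, show j < K + 1 by omega]
  · simp only [contract, lt_irrefl, if_false, if_true, update_self]
    congr 1
    funext t
    simp [word, show j + t < K + k by omega]
  · simp only [contract, word, update_of_ne hj.ne', if_neg hj.not_gt, if_neg hj.ne']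
    split_ifs <;> first | rfl | omega

lemma contract_word_of_lt {i k : ℕ} (h : k < i) (j : ℕ) :
    contract μ (word b b' y k) i j = update (word b b' y k) i (μ j fun _ => b') := by
  funext s
  rcases lt_trichotomy s i with hs | rfl | hs
  · simp [contract, hs, hs.ne]
  · simp only [contract, lt_irrefl, if_false, if_true, update_self]
    congr 1
    funext t
    simp [word, show ¬ s + t < k by omega, show s + t ≠ k by omega]
  · simp only [contract, word, update_of_ne hs.ne', if_neg hs.not_gt, if_neg hs.ne']
    split_ifs <;> first | rfl | omega

lemma contract_word_add (a p q : ℕ) :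
    contract μ (word b b' y (a + p)) a (p + q + 1)
      = word b b' (μ (p + q + 1) fun t => word b b' y p t) a := by
  funext j
  rcases lt_trichotomy j a with hj | rfl | hj
  · simp [contract, word, hj, show j < a + p by omega]
  · simp [contract, word]
  · simp only [contract, word, if_neg hj.not_gt, if_neg hj.ne']
    split_ifs <;> first | rfl | omega

end Words

section Deform

variable {R C : Type*} [CommSemiring R] [AddCommMonoid C] [Module R C]
  (m : ∀ k : ℕ, MultilinearMap R (fun _ : Fin k => C) C) (b b' : C)

lemma map_update_comp_val {n i : ℕ} (f : MultilinearMap R (fun _ : Fin n => C) C) (hi : i < n)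
    (w : ℕ → C) (z : C) : f (fun j => update w i z j) = f.toLinearMap (fun j => w j) ⟨i, hi⟩ z := by
  rw [MultilinearMap.toLinearMap_apply]
  exact congrArg f (update_comp_eq_of_injective w Fin.val_injective ⟨i, hi⟩ z)

lemma map_comp_val_congr {n n' : ℕ} (h : n = n') (w : ℕ → C) :
    m n (fun j => w j) = m n' (fun j => w j) := by
  subst h; rfl

/-- `deformTerm m b b' k l y = m_{k+l+1}(b, …, b, y, b', …, b')` with `k` copies of `b` and
`l` copies of `b'`. -/
def deformTerm (k l : ℕ) : C →ₗ[R] C :=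
  (m (k + l + 1)).toLinearMap (fun j => word b b' 0 k j) ⟨k, by omega⟩

lemma deformTerm_apply (k l : ℕ) (y : C) :
    deformTerm m b b' k l y = m (k + l + 1) (fun j => word b b' y k j) := by
  rw [word_eq_update b b' y 0, map_update_comp_val _ (by omega)]
  rfl

noncomputable def deformedDiff : C →ₗ[R] C := ∑ᶠ p : ℕ × ℕ, deformTerm m b b' p.1 p.2

variable {m} {N : ℕ} (hN : ∀ k, N ≤ k → m k = 0)
include hN

lemma hasFiniteSupport_deformTerm :
    HasFiniteSupport fun p : ℕ × ℕ => deformTerm m b b' p.1 p.2 := by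
  refine (finite_Iic (N, N)).subset fun p hp => ?_
  by_contra hle
  refine hp (show deformTerm m b b' p.1 p.2 = 0 from ?_)
  rw [deformTerm, hN _ (by simp [Prod.le_def] at hle; omega)]
  ext; simp

lemma hasFiniteSupport_deformTerm_apply (y : C) :
    HasFiniteSupport fun p : ℕ × ℕ => deformTerm m b b' p.1 p.2 y :=
  (hasFiniteSupport_deformTerm b b' hN).comp (g := fun f : C →ₗ[R] C => f y) rfl

lemma hasFiniteSupport_apply_const (c : C) : HasFiniteSupport fun k => m k fun _ => c := by
  refine (finite_Iic N).subset fun k hk => ?_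
  by_contra h
  exact hk (show m k (fun _ => c) = 0 by rw [hN k (by simp at h; omega)]; rfl)

lemma deformedDiff_apply (y : C) :
    deformedDiff m b b' y = ∑ᶠ p : ℕ × ℕ, deformTerm m b b' p.1 p.2 y :=
  map_finsum (LinearMap.applyₗ y) (hasFiniteSupport_deformTerm b b' hN)

lemma deformedDiff_apply_eq_finsum_finsum (y : C) :
    deformedDiff m b b' y = ∑ᶠ (k : ℕ) (l : ℕ), m (k + l + 1) (fun j => word b b' y k j) := by
  rw [deformedDiff_apply b b' hN, finsum_curry _ (hasFiniteSupport_deformTerm_apply b b' hN y)]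
  simp only [deformTerm_apply]

lemma deformedDiff_deformedDiff (x : C) :
    deformedDiff m b b' (deformedDiff m b b' x)
      = ∑ᶠ w : (ℕ × ℕ) × ℕ × ℕ,
          deformTerm m b b' w.1.1 w.1.2 (deformTerm m b b' w.2.1 w.2.2 x) := by
  have hT := hasFiniteSupport_deformTerm b b' hN
  have hfin : HasFiniteSupport fun w : (ℕ × ℕ) × ℕ × ℕ =>
      deformTerm m b b' w.1.1 w.1.2 (deformTerm m b b' w.2.1 w.2.2 x) := by
    refine (hT.prod hT).subset fun w hw => ⟨fun h => hw ?_, fun h => hw ?_⟩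
    · simp [show deformTerm m b b' w.1.1 w.1.2 = 0 from h]
    · simp [show deformTerm m b b' w.2.1 w.2.2 = 0 from h]
  rw [finsum_curry _ hfin, deformedDiff_apply b b' hN, deformedDiff_apply b b' hN]
  exact finsum_congr fun p => map_finsum _ (hasFiniteSupport_deformTerm_apply b b' hN x)

end Deform

section Relation

variable {R C : Type*} [CommRing R] [AddCommGroup C] [Module R C]
  (m : ∀ k : ℕ, MultilinearMap R (fun _ : Fin k => C) C) (b b' x : C) (d : ℤ)

/-- The degrees of the letters of `word b b' x k` when `b, b'` have degree `1` and `x` has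
degree `d`. -/
def wordDeg (k t : ℕ) : ℤ := if t = k then d else 1

lemma sum_range_wordDeg (k i : ℕ) :
    ∑ t ∈ Finset.range i, wordDeg d k t = i + if k < i then d - 1 else 0 := by
  induction i with
  | zero => simp
  | succ i ih =>
    rw [Finset.sum_range_succ, ih]
    simp only [wordDeg]
    split_ifs <;> push_cast <;> omega

lemma sgn_wordDeg_of_le {k i : ℕ} (h : i ≤ k) :
    sgn (i + ∑ t ∈ Finset.range i, wordDeg d k t) = 1 := by
  rw [sum_range_wordDeg, if_neg (by omega), show (i : ℤ) + (i + 0) = 0 + 2 * i by ring,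
    sgn_add_two_mul]
  rfl

lemma sgn_wordDeg_of_lt {k i : ℕ} (h : k < i) :
    sgn (i + ∑ t ∈ Finset.range i, wordDeg d k t) = sgn (d + 1) := by
  rw [sum_range_wordDeg, if_pos h, show (i : ℤ) + (i + (d - 1)) = d + 1 + 2 * (i - 1) by ring,
    sgn_add_two_mul]

/-- The summand indexed by `(i, j)` of the A∞ relation evaluated on `b^k x b'^l`. -/
def relSummand : (ℕ × ℕ) × ℕ × ℕ → C
  | ((k, l), (i, j)) =>
    if i + j ≤ k + l + 1 then
      sgn (i + ∑ t ∈ Finset.range i, wordDeg d k t) •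
        m (k + l + 1 - j + 1) (fun s => contract (fun n v => m n v) (word b b' x k) i j s)
    else 0

/-- For `z = ((k, l), (i, j))`, the nested operation `m_j` of `relSummand … z` reads only `b`s
(`leftIdx`), reads `x` (`midIdx`), or reads only `b'`s (`rightIdx`). -/
def leftIdx : Set ((ℕ × ℕ) × ℕ × ℕ) := {z | z.2.1 + z.2.2 ≤ z.1.1}

def midIdx : Set ((ℕ × ℕ) × ℕ × ℕ) :=
  {z | z.2.1 ≤ z.1.1 ∧ z.1.1 < z.2.1 + z.2.2 ∧ z.2.1 + z.2.2 ≤ z.1.1 + z.1.2 + 1}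

def rightIdx : Set ((ℕ × ℕ) × ℕ × ℕ) :=
  {z | z.1.1 < z.2.1 ∧ z.2.1 + z.2.2 ≤ z.1.1 + z.1.2 + 1}

variable {m} {G : ℤ → Submodule R C} {N : ℕ} (hN : ∀ k, N ≤ k → m k = 0)

lemma finsum_relSummand_eq_zero_of_mem (hrel : AInftyRel G (fun k v => m k v))
    (hb : b ∈ G 1) (hb' : b' ∈ G 1) (hx : x ∈ G d) (k l : ℕ) :
    ∑ᶠ p : ℕ × ℕ, relSummand m b b' x d ((k, l), p) = 0 := by
  have hw : ∀ t, word b b' x k t ∈ G (wordDeg d k t) := fun t => by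
    unfold word wordDeg
    split_ifs <;> first | assumption | omega
  rw [finsum_eq_sum_of_support_subset _
    (s := Finset.range (k + l + 2) ×ˢ Finset.range (k + l + 2))]
  · exact hrel (k + l + 1) (wordDeg d k) (word b b' x k) hw
  · rintro ⟨i, j⟩ hp
    simp only [mem_support, relSummand, ne_eq, ite_eq_right_iff, not_forall] at hp
    obtain ⟨hij, -⟩ := hp
    simp only [Finset.coe_product, Finset.coe_range, mem_prod, mem_Iio]
    omega

lemma finsum_mem_relSummand_mid :
    ∑ᶠ z ∈ midIdx, relSummand m b b' x d z
      = ∑ᶠ w : (ℕ × ℕ) × ℕ × ℕ,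
          deformTerm m b b' w.1.1 w.1.2 (deformTerm m b b' w.2.1 w.2.2 x) := by
  have hrange : midIdx
      = range fun w : (ℕ × ℕ) × ℕ × ℕ =>
          ((w.1.1 + w.2.1, w.1.2 + w.2.2), (w.1.1, w.2.1 + w.2.2 + 1)) := by
    ext ⟨⟨k, l⟩, i, j⟩
    simp only [midIdx, mem_ofPred_eq, mem_range, Prod.mk.injEq, Prod.exists]
    constructor
    · intro h
      exact ⟨i, k + l + 1 - i - j, k - i, i + j - 1 - k, ⟨by omega, by omega⟩, rfl, by omega⟩
    · rintro ⟨a, c, p, q, ⟨rfl, rfl⟩, rfl, rfl⟩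
      omega
  rw [hrange, finsum_mem_range]
  · refine finsum_congr fun ⟨⟨a, c⟩, p, q⟩ => ?_
    dsimp only [relSummand]
    rw [if_pos (by omega), sgn_wordDeg_of_le d (by omega), one_smul, contract_word_add,
      map_comp_val_congr m (by omega : _ = a + c + 1), deformTerm_apply, deformTerm_apply]
  · rintro ⟨⟨a, c⟩, p, q⟩ ⟨⟨a', c'⟩, p', q'⟩ h
    simp only [Prod.mk.injEq] at h ⊢
    omega

include hN

lemma hasFiniteSupport_relSummand : HasFiniteSupport (relSummand m b b' x d) := by
  refine (finite_Iic ((2 * N, 2 * N), (2 * N, 2 * N))).subset ?_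
  rintro ⟨⟨k, l⟩, i, j⟩ hz
  simp only [mem_support, relSummand, ne_eq, ite_eq_right_iff, not_forall] at hz
  obtain ⟨hij, hne⟩ := hz
  have houter : k + l + 1 - j + 1 < N := by
    by_contra h
    exact hne (by rw [hN _ (by omega)]; simp)
  have hinner : j < N := by
    by_contra h
    refine hne ?_
    rw [(m _).map_coord_zero (⟨i, by omega⟩ : Fin (k + l + 1 - j + 1))
      (by simp [contract, hN j (by omega)]), smul_zero]
  simp only [mem_Iic, Prod.mk_le_mk]
  omega

lemma finsum_mem_relSummand_left (hMC : ∑ᶠ k, m k (fun _ => b) = 0) :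
    ∑ᶠ z ∈ leftIdx, relSummand m b b' x d z = 0 := by
  have himage : leftIdx
      = (fun w : (ℕ × ℕ × ℕ) × ℕ => ((w.1.1 + w.2, w.1.2.1), (w.1.2.2, w.2))) ''
          ({a | a.2.2 ≤ a.1} ×ˢ univ) := by
    ext ⟨⟨k, l⟩, i, j⟩
    simp only [leftIdx, mem_ofPred_eq, mem_image, mem_prod, mem_univ, and_true, Prod.mk.injEq,
      Prod.exists]
    constructor
    · intro h
      exact ⟨k - j, l, i, j, by omega, ⟨by omega, rfl⟩, rfl, rfl⟩
    · rintro ⟨K, l', i', j', h, ⟨rfl, rfl⟩, rfl, rfl⟩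
      omega
  rw [himage]
  refine finsum_mem_image_prod_univ_eq_zero (hasFiniteSupport_relSummand b b' x d hN) ?_ ?_
  · rintro ⟨⟨K, l, i⟩, j⟩ ⟨⟨K', l', i'⟩, j'⟩ h
    simp only [Prod.mk.injEq] at h ⊢
    omega
  · rintro ⟨K, l, i⟩ (hi : i ≤ K)
    have hterm : ∀ j, relSummand m b b' x d ((K + j, l), (i, j))
        = (m (K + l + 2)).toLinearMap (fun s => word b b' x (K + 1) s) ⟨i, by omega⟩
            (m j fun _ => b) := fun j => by
      dsimp only [relSummand]
      rw [if_pos (by omega), sgn_wordDeg_of_le d (by omega), one_smul,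
        contract_word_of_le _ _ _ _ hi, map_comp_val_congr m (by omega : _ = K + l + 2),
        map_update_comp_val]
    simp only [hterm]
    exact finsum_map_eq_zero_of_finsum_eq_zero (hasFiniteSupport_apply_const hN b) hMC _

lemma finsum_mem_relSummand_right (hMC' : ∑ᶠ k, m k (fun _ => b') = 0) :
    ∑ᶠ z ∈ rightIdx, relSummand m b b' x d z = 0 := by
  have himage : rightIdx
      = (fun w : (ℕ × ℕ × ℕ) × ℕ => ((w.1.1, w.1.2.1 + w.2), (w.1.2.2, w.2))) ''
          ({a | a.1 < a.2.2 ∧ a.2.2 ≤ a.1 + a.2.1 + 1} ×ˢ univ) := by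
    ext ⟨⟨k, l⟩, i, j⟩
    simp only [rightIdx, mem_ofPred_eq, mem_image, mem_prod, mem_univ, and_true, Prod.mk.injEq,
      Prod.exists]
    constructor
    · intro h
      exact ⟨k, l - j, i, j, ⟨h.1, by omega⟩, ⟨rfl, by omega⟩, rfl, rfl⟩
    · rintro ⟨k', L, i', j', h, ⟨rfl, rfl⟩, rfl, rfl⟩
      omega
  rw [himage]
  refine finsum_mem_image_prod_univ_eq_zero (hasFiniteSupport_relSummand b b' x d hN) ?_ ?_
  · rintro ⟨⟨k, L, i⟩, j⟩ ⟨⟨k', L', i'⟩, j'⟩ h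
    simp only [Prod.mk.injEq] at h ⊢
    omega
  · rintro ⟨k, L, i⟩ (hi : k < i ∧ i ≤ k + L + 1)
    have hterm : ∀ j, relSummand m b b' x d ((k, L + j), (i, j))
        = (sgn (d + 1) • (m (k + L + 2)).toLinearMap (fun s => word b b' x k s) ⟨i, by omega⟩)
            (m j fun _ => b') := fun j => by
      dsimp only [relSummand]
      rw [if_pos (by omega), sgn_wordDeg_of_lt d hi.1, contract_word_of_lt _ _ _ _ hi.1,
        map_comp_val_congr m (by omega : _ = k + L + 2), map_update_comp_val,
        LinearMap.smul_apply]
    simp only [hterm]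
    exact finsum_map_eq_zero_of_finsum_eq_zero (hasFiniteSupport_apply_const hN b') hMC' _

lemma finsum_relSummand_eq_zero (hrel : AInftyRel G (fun k v => m k v)) (hb : b ∈ G 1)
    (hb' : b' ∈ G 1) (hx : x ∈ G d) : ∑ᶠ z, relSummand m b b' x d z = 0 := by
  rw [finsum_curry _ (hasFiniteSupport_relSummand b b' x d hN)]
  exact finsum_eq_zero_of_forall_eq_zero fun p =>
    finsum_relSummand_eq_zero_of_mem b b' x d hrel hb hb' hx p.1 p.2

lemma deformedDiff_deformedDiff_of_mem (hrel : AInftyRel G (fun k v => m k v))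
    (hb : b ∈ G 1) (hb' : b' ∈ G 1) (hMC : ∑ᶠ k, m k (fun _ => b) = 0)
    (hMC' : ∑ᶠ k, m k (fun _ => b') = 0) (hx : x ∈ G d) :
    deformedDiff m b b' (deformedDiff m b b' x) = 0 := by
  rw [deformedDiff_deformedDiff b b' hN, ← finsum_mem_relSummand_mid b b' x d,
    ← finsum_relSummand_eq_zero b b' x d hN hrel hb hb' hx,
    finsum_eq_finsum_mem_add_add (hasFiniteSupport_relSummand b b' x d hN)
      (s := leftIdx) (t := midIdx) (u := rightIdx)
      (disjoint_left.2 fun _ h h' => by simp_all only [leftIdx, midIdx, mem_ofPred_eq]; omega)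
      (disjoint_left.2 fun _ h h' => by simp_all only [leftIdx, rightIdx, mem_ofPred_eq]; omega)
      (disjoint_left.2 fun _ h h' => by simp_all only [midIdx, rightIdx, mem_ofPred_eq]; omega),
    finsum_mem_relSummand_left b b' x d hN hMC, finsum_mem_relSummand_right b b' x d hN hMC',
    zero_add, add_zero]
  rintro ⟨⟨k, l⟩, i, j⟩ hz
  simp only [mem_support, relSummand, ne_eq, ite_eq_right_iff, not_forall] at hz
  obtain ⟨hij, -⟩ := hz
  simp only [leftIdx, midIdx, rightIdx, mem_union, mem_ofPred_eq]
  omega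

end Relation

end AInfty

theorem deformed_differential_squared_zero_general
    {R C : Type*} [CommRing R] [AddCommGroup C] [Module R C]
    (G : ℤ → Submodule R C) (hG : (⨆ d, G d) = ⊤)
    (m : ∀ k : ℕ, MultilinearMap R (fun _ : Fin k => C) C)
    (hrel : AInftyRel G (fun k v => m k v))
    (hfin : ∃ N : ℕ, ∀ k, N ≤ k → m k = 0)
    (b b' : C)
    (hbdeg : b ∈ G 1) (hb'deg : b' ∈ G 1)
    (hMC : (∑ᶠ k : ℕ, m k (fun _ => b)) = 0)
    (hMC' : (∑ᶠ k : ℕ, m k (fun _ => b')) = 0)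
    (Dbb' : C → C)
    (hDbb' : ∀ y : C, Dbb' y =
      ∑ᶠ (k : ℕ), ∑ᶠ (l : ℕ),
        m (k + l + 1) (fun j : Fin (k + l + 1) =>
          if j.1 < k then b else if j.1 = k then y else b')) :
    ∀ x : C, Dbb' (Dbb' x) = 0 := by
  obtain ⟨N, hN⟩ := hfin
  have hD : ∀ y, Dbb' y = AInfty.deformedDiff m b b' y := fun y =>
    (hDbb' y).trans (AInfty.deformedDiff_apply_eq_finsum_finsum b b' hN y).symm
  have hker : ⊤ ≤ LinearMap.ker (AInfty.deformedDiff m b b' ∘ₗ AInfty.deformedDiff m b b') :=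
    hG ▸ iSup_le fun d x hx =>
      AInfty.deformedDiff_deformedDiff_of_mem b b' x d hN hrel hbdeg hb'deg hMC hMC' hx
  intro x
  rw [hD, hD]
  exact hker Submodule.mem_top

/-- Let `b, b'` be bounding cochains of a filtered A∞ algebra,
i.e. degree-1 elements with `b ≡ 0 mod Λ₊` (here `I` plays the role of the
maximal ideal `Λ₊` of the Novikov ring) satisfying the Maurer–Cartan equation
`Σ_{k≥0} mₖ(b,…,b) = 0`, and define the deformed operator
`m₁^{b,b'}(x) = Σ_{k,ℓ≥0} m_{k+ℓ+1}(b,…,b, x, b',…,b')`.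
Then `m₁^{b,b'} ∘ m₁^{b,b'} = 0`.  (To keep all sums finite we assume the
operations vanish for large arity, as allowed in the context.) -/
theorem deformed_differential_squared_zero
    {R C : Type*} [CommRing R] [AddCommGroup C] [Module R C]
    (G : ℤ → Submodule R C) (hG : (⨆ d, G d) = ⊤)
    (I : Ideal R)
    (m : ∀ k : ℕ, MultilinearMap R (fun _ : Fin k => C) C)
    (hrel : AInftyRel G (fun k v => m k v))
    (hfin : ∃ N : ℕ, ∀ k, N ≤ k → m k = 0)
    (b b' : C)
    (hbdeg : b ∈ G 1) (hb'deg : b' ∈ G 1)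
    (hbI : b ∈ I • (⊤ : Submodule R C)) (hb'I : b' ∈ I • (⊤ : Submodule R C))
    (hMC : (∑ᶠ k : ℕ, m k (fun _ => b)) = 0)
    (hMC' : (∑ᶠ k : ℕ, m k (fun _ => b')) = 0)
    (Dbb' : C → C)
    (hDbb' : ∀ y : C, Dbb' y =
      ∑ᶠ (k : ℕ), ∑ᶠ (l : ℕ),
        m (k + l + 1) (fun j : Fin (k + l + 1) =>
          if j.1 < k then b else if j.1 = k then y else b')) :
    ∀ x : C, Dbb' (Dbb' x) = 0 :=
  deformed_differential_squared_zero_general G hG m hrel hfin b b' hbdeg hb'deg hMC hMC' Dbb' hDbb'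
end

section
/- The deformed operations mₖ^{(b₀,…,bₖ)} of the associated strict category of a curved filtered A∞ category satisfy the A∞ relations. -/
attribute [local instance] Classical.propDecidable

/-- Extension of a tuple `l : Fin (k+1) → ℕ` to all of `ℕ` (by zero). -/
def lext {k : ℕ} (l : Fin (k + 1) → ℕ) (i : ℕ) : ℕ :=
  if hi : i < k + 1 then l ⟨i, hi⟩ else 0


namespace StrictAux

open Finset

lemma sgn_two_mul_add (a z : ℤ) : sgn (2 * a + z) = sgn z := by
  have h : ((-1 : ℤˣ) ^ (2 * a + z)) = (((-1 : ℤˣ) ^ (2 : ℤ)) ^ a) * (-1 : ℤˣ) ^ z := by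
    rw [zpow_add, zpow_mul]
  have h2 : ((-1 : ℤˣ) ^ (2 : ℤ)) = 1 := by decide
  rw [sgn, h, h2, one_zpow, one_mul]; rfl

def pos (L : ℕ → ℕ) (t : ℕ) : ℕ := (∑ i ∈ Finset.range (t + 1), L i) + t

lemma pos_lt_pos {L : ℕ → ℕ} {s t : ℕ} (h : s < t) : pos L s < pos L t := by
  unfold pos
  have : ∑ i ∈ range (s + 1), L i ≤ ∑ i ∈ range (t + 1), L i := by
    apply Finset.sum_le_sum_of_subset
    intro a ha; simp only [mem_range] at *; omega
  omega

lemma pos_le_pos {L : ℕ → ℕ} {s t : ℕ} (h : s ≤ t) : pos L s ≤ pos L t := by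
  rcases Nat.lt_or_ge s t with h' | h'
  · exact (pos_lt_pos h').le
  · have : s = t := le_antisymm h h'
    rw [this]

lemma le_pos (L : ℕ → ℕ) (t : ℕ) : t ≤ pos L t := by unfold pos; omega

lemma pos_inj {L : ℕ → ℕ} {s t : ℕ} (h : pos L s = pos L t) : s = t := by
  rcases Nat.lt_trichotomy s t with h' | h' | h'
  · exact absurd h (pos_lt_pos h').ne
  · exact h'
  · exact absurd h.symm (pos_lt_pos h').ne

variable {C : Type*}

noncomputable def wd (b : C) (k : ℕ) (L : ℕ → ℕ) (x : ℕ → C) (j : ℕ) : C :=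
  if h : ∃ t, t < k ∧ j = (∑ i ∈ Finset.range (t + 1), L i) + t then x h.choose else b

noncomputable def Dd (d : ℕ → ℤ) (k : ℕ) (L : ℕ → ℕ) (j : ℕ) : ℤ :=
  if h : ∃ t, t < k ∧ j = (∑ i ∈ Finset.range (t + 1), L i) + t then d h.choose else 1

lemma wd_pos (b : C) {k t : ℕ} (L : ℕ → ℕ) (x : ℕ → C) (ht : t < k) :
    wd b k L x (pos L t) = x t := by
  unfold wd
  have h : ∃ t', t' < k ∧ pos L t = (∑ i ∈ Finset.range (t' + 1), L i) + t' := ⟨t, ht, rfl⟩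
  rw [dif_pos h]
  have hs := h.choose_spec
  have : h.choose = t := (pos_inj (L := L) (hs.2 : pos L t = pos L h.choose).symm)
  rw [this]

lemma wd_eq_b (b : C) {k j : ℕ} (L : ℕ → ℕ) (x : ℕ → C)
    (h : ∀ t, t < k → j ≠ pos L t) : wd b k L x j = b := by
  unfold wd
  rw [dif_neg]
  rintro ⟨t, ht, rfl⟩
  exact h t ht rfl

lemma Dd_pos (d : ℕ → ℤ) {k t : ℕ} (L : ℕ → ℕ) (ht : t < k) :
    Dd d k L (pos L t) = d t := by
  unfold Dd
  have h : ∃ t', t' < k ∧ pos L t = (∑ i ∈ Finset.range (t' + 1), L i) + t' := ⟨t, ht, rfl⟩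
  rw [dif_pos h]
  have hs := h.choose_spec
  have : h.choose = t := (pos_inj (L := L) (hs.2 : pos L t = pos L h.choose).symm)
  rw [this]

lemma Dd_eq_one (d : ℕ → ℤ) {k j : ℕ} (L : ℕ → ℕ)
    (h : ∀ t, t < k → j ≠ pos L t) : Dd d k L j = 1 := by
  unfold Dd
  rw [dif_neg]
  rintro ⟨t, ht, rfl⟩
  exact h t ht rfl

lemma wd_mem {R : Type*} [CommRing R] [AddCommGroup C] [Module R C] (G : ℤ → Submodule R C)
    (b : C) (k : ℕ) (L : ℕ → ℕ) (x : ℕ → C) (d : ℕ → ℤ)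
    (hx : ∀ j, x j ∈ G (d j)) (hb : b ∈ G 1) (j : ℕ) :
    wd b k L x j ∈ G (Dd d k L j) := by
  unfold wd Dd
  by_cases h : ∃ t, t < k ∧ j = (∑ i ∈ Finset.range (t + 1), L i) + t
  · rw [dif_pos h, dif_pos h]; exact hx _
  · rw [dif_neg h, dif_neg h]; exact hb

lemma sum_Dd {d : ℕ → ℤ} {nn : ℕ} {L : ℕ → ℕ} {I i : ℕ}
    (hiff : ∀ t, t < nn → (pos L t < I ↔ t < i)) (hi : i ≤ nn) :
    ∑ j ∈ range I, Dd d nn L j = (I : ℤ) - i + ∑ t ∈ range i, d t := by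
  have key : ∑ t ∈ range i, (d t - 1) = ∑ j ∈ range I, (Dd d nn L j - 1) := by
    apply Finset.sum_of_injOn (e := pos L)
    · intro a _ c _ h; exact pos_inj h
    · intro t ht
      simp only [coe_range, Set.mem_Iio, mem_coe, mem_range] at *
      exact (hiff t (lt_of_lt_of_le ht hi)).2 ht
    · intro j hj hj'
      have : Dd d nn L j = 1 := by
        apply Dd_eq_one
        intro t ht hne
        apply hj'
        refine ⟨t, ?_, hne.symm⟩
        simp only [coe_range, Set.mem_Iio]
        simp only [mem_range] at hj
        exact (hiff t ht).1 (hne ▸ hj)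
      rw [this]; ring
    · intro t ht
      simp only [mem_range] at ht
      rw [Dd_pos d L (lt_of_lt_of_le ht hi)]
  have e1 : ∑ j ∈ range I, Dd d nn L j = (I : ℤ) + ∑ j ∈ range I, (Dd d nn L j - 1) := by
    rw [Finset.sum_sub_distrib]; simp
  have e2 : ∑ t ∈ range i, (d t - 1) = ∑ t ∈ range i, d t - i := by
    rw [Finset.sum_sub_distrib]; simp
  rw [e1, ← key, e2]; ring

lemma sgn_sum_Dd {d : ℕ → ℤ} {nn : ℕ} {L : ℕ → ℕ} {I i : ℕ}
    (hiff : ∀ t, t < nn → (pos L t < I ↔ t < i)) (hi : i ≤ nn) :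
    sgn (I + ∑ j ∈ range I, Dd d nn L j) = sgn (i + ∑ t ∈ range i, d t) := by
  rw [sum_Dd hiff hi]
  have : (I : ℤ) + ((I : ℤ) - i + ∑ t ∈ range i, d t)
      = 2 * ((I : ℤ) - i) + ((i : ℤ) + ∑ t ∈ range i, d t) := by ring
  rw [this, sgn_two_mul_add]

lemma m_congr {F : ∀ k : ℕ, (Fin k → C) → C} {A A' : ℕ} (h : A = A')
    {f : Fin A → C} {f' : Fin A' → C}
    (hf : ∀ (j : ℕ) (hj : j < A), f ⟨j, hj⟩ = f' ⟨j, h ▸ hj⟩) : F A f = F A' f' := by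
  subst h
  congr 1
  exact funext fun j => hf j j.2

lemma finsum_box {M : Type*} [AddCommMonoid M] {k P : ℕ} (f : (Fin (k + 1) → ℕ) → M)
    (h0 : ∀ l : Fin (k + 1) → ℕ, (∃ r, P ≤ l r) → f l = 0) :
    ∑ᶠ l, f l = ∑ l ∈ Fintype.piFinset (fun _ : Fin (k + 1) => Finset.range P), f l := by
  apply finsum_eq_sum_of_support_subset
  intro l hl
  simp only [Function.mem_support] at hl
  simp only [mem_coe, Fintype.mem_piFinset, mem_range]
  intro r
  by_contra hr
  exact hl (h0 l ⟨r, not_lt.1 hr⟩)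

lemma finsum_nat {M : Type*} [AddCommMonoid M] (f : ℕ → M) {P : ℕ}
    (h0 : ∀ k, P ≤ k → f k = 0) : ∑ᶠ k, f k = ∑ k ∈ range P, f k := by
  apply finsum_eq_sum_of_support_subset
  intro k hk
  simp only [Function.mem_support] at hk
  simp only [mem_coe, mem_range]
  by_contra hr
  exact hk (h0 k (not_lt.1 hr))

lemma lext_apply {k : ℕ} (l : Fin (k + 1) → ℕ) {i : ℕ} (h : i < k + 1) :
    lext l i = l ⟨i, h⟩ := dif_pos h

lemma lext_val {k : ℕ} (l : Fin (k + 1) → ℕ) (r : Fin (k + 1)) : lext l r.1 = l r :=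
  dif_pos r.2

lemma lext_eq_zero {k : ℕ} (l : Fin (k + 1) → ℕ) {i : ℕ} (h : k + 1 ≤ i) :
    lext l i = 0 := dif_neg (by omega)

lemma sum_univ_lext {k : ℕ} (l : Fin (k + 1) → ℕ) :
    ∑ i, l i = ∑ r ∈ range (k + 1), lext l r := by
  rw [Finset.sum_range]
  apply Finset.sum_congr rfl
  intro i _
  rw [lext_apply l i.2]

lemma lext_of_trunc {k : ℕ} (f : ℕ → ℕ) (hf : ∀ r, k + 1 ≤ r → f r = 0) :
    lext (fun r : Fin (k + 1) => f r.1) = f := by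
  funext r
  unfold lext
  split
  · rfl
  · exact (hf r (by omega)).symm

/-- index of the first `x` at position `≥ I` -/
def cIdx (nn : ℕ) (L : ℕ → ℕ) (I : ℕ) : ℕ :=
  ((range nn).filter (fun t => pos L t < I)).card

lemma cIdx_le (nn : ℕ) (L : ℕ → ℕ) (I : ℕ) : cIdx nn L I ≤ nn := by
  unfold cIdx
  exact (card_filter_le _ _).trans (by simp)

lemma cIdx_iff {nn : ℕ} (L : ℕ → ℕ) (I : ℕ) :
    ∀ t, t < nn → (pos L t < I ↔ t < cIdx nn L I) := by
  intro t ht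
  constructor
  · intro hp
    have hsub : range (t + 1) ⊆ (range nn).filter (fun t => pos L t < I) := by
      intro a ha
      simp only [mem_range] at ha
      simp only [mem_filter, mem_range]
      exact ⟨by omega, lt_of_le_of_lt (pos_le_pos (by omega)) hp⟩
    have := Finset.card_le_card hsub
    simp only [card_range] at this
    unfold cIdx
    omega
  · intro hc
    by_contra hp
    push_neg at hp
    have hsub : (range nn).filter (fun t => pos L t < I) ⊆ range t := by
      intro a ha
      simp only [mem_filter, mem_range] at ha
      simp only [mem_range]
      by_contra hat
      push_neg at hat
      exact absurd (lt_of_le_of_lt (pos_le_pos hat) ha.2) (not_lt.2 hp)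
    have := Finset.card_le_card hsub
    simp only [card_range] at this
    unfold cIdx at hc
    omega

lemma cIdx_eq {nn : ℕ} (L : ℕ → ℕ) (I : ℕ) {i : ℕ}
    (hiff : ∀ t, t < nn → (pos L t < I ↔ t < i)) (hi : i ≤ nn) :
    cIdx nn L I = i := by
  unfold cIdx
  have : (range nn).filter (fun t => pos L t < I) = range i := by
    ext a
    simp only [mem_filter, mem_range]
    constructor
    · rintro ⟨h1, h2⟩; exact (hiff a h1).1 h2
    · intro h; exact ⟨by omega, (hiff a (by omega)).2 h⟩
  rw [this, card_range]

lemma cIdx_mono {nn : ℕ} (L : ℕ → ℕ) {I J : ℕ} (h : I ≤ J) :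
    cIdx nn L I ≤ cIdx nn L J := by
  apply Finset.card_le_card
  intro a ha
  simp only [mem_filter, mem_range] at *
  exact ⟨ha.1, lt_of_lt_of_le ha.2 h⟩

section Terms

open Finset

variable {R C : Type*} [CommRing R] [AddCommGroup C] [Module R C]
variable (m : ∀ k : ℕ, MultilinearMap R (fun _ : Fin k => C) C)
variable (b : C) (x : ℕ → C) (d : ℕ → ℤ) (n : ℕ)

noncomputable def FTbody (M : ℕ) (L : ℕ → ℕ) (p : ℕ × ℕ) : C :=
  sgn ((p.1 : ℤ) + ∑ j ∈ Finset.range p.1, Dd d n L j) •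
    m (M - p.2 + 1) (fun j : Fin (M - p.2 + 1) =>
      if (j : ℕ) < p.1 then wd b n L x (j : ℕ)
      else if (j : ℕ) = p.1 then m p.2 (fun t : Fin p.2 => wd b n L x (p.1 + (t : ℕ)))
      else wd b n L x ((j : ℕ) + p.2 - 1))

noncomputable def FT (M : ℕ) (L : ℕ → ℕ) (p : ℕ × ℕ) : C :=
  if p.1 + p.2 ≤ M then FTbody m b x d n M L p else 0

noncomputable def FTx (M : ℕ) (L : ℕ → ℕ) (p : ℕ × ℕ) : C :=
  if p.1 + p.2 ≤ M ∧ (∃ t, t < n ∧ p.1 ≤ pos L t ∧ pos L t < p.1 + p.2) then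
    FTbody m b x d n M L p else 0

noncomputable def FTb (M : ℕ) (L : ℕ → ℕ) (p : ℕ × ℕ) : C :=
  if p.1 + p.2 ≤ M ∧ ¬ (∃ t, t < n ∧ p.1 ≤ pos L t ∧ pos L t < p.1 + p.2) then
    FTbody m b x d n M L p else 0

lemma FT_split (M : ℕ) (L : ℕ → ℕ) (p : ℕ × ℕ) :
    FT m b x d n M L p = FTx m b x d n M L p + FTb m b x d n M L p := by
  unfold FT FTx FTb
  by_cases h1 : p.1 + p.2 ≤ M
  · by_cases h2 : ∃ t, t < n ∧ p.1 ≤ pos L t ∧ pos L t < p.1 + p.2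
    · rw [if_pos h1, if_pos ⟨h1, h2⟩, if_neg (fun hh => hh.2 h2), add_zero]
    · rw [if_pos h1, if_neg (fun hh => h2 hh.2), if_pos ⟨h1, h2⟩, zero_add]
  · rw [if_neg h1, if_neg (fun hh => h1 hh.1), if_neg (fun hh => h1 hh.1), add_zero]

noncomputable def GB (L'' : ℕ → ℕ) (S'' : ℕ) (s K : ℕ) : C :=
  if hs : s ≤ n + S'' then
    sgn ((s : ℤ) + ∑ j ∈ Finset.range s, Dd d n L'' j) •
      m (n + S'' + 1) (Function.update
        (fun j : Fin (n + S'' + 1) =>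
          if (j : ℕ) < s then wd b n L'' x (j : ℕ)
          else if (j : ℕ) = s then 0
          else wd b n L'' x ((j : ℕ) - 1))
        ⟨s, by omega⟩ (m K (fun _ => b)))
  else 0

lemma corrA (L : ℕ → ℕ) (hLt : ∀ r, n + 1 ≤ r → L r = 0) (I K : ℕ)
    (hguard : I + K ≤ n + ∑ r ∈ range (n + 1), L r)
    (hallb : ¬ ∃ t, t < n ∧ I ≤ pos L t ∧ pos L t < I + K)
    (c : ℕ) (hc : c = cIdx n L I)
    (L'' : ℕ → ℕ) (hL'' : L'' = fun r => L r - (if r = c then K else 0)) :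
    (∀ r, L'' r + (if r = c then K else 0) = L r) ∧
    (∀ r, n + 1 ≤ r → L'' r = 0) ∧
    ((∑ r ∈ range (n + 1), L'' r) + K = ∑ r ∈ range (n + 1), L r) ∧
    (cIdx n L'' I = c) ∧
    (I ≤ n + ∑ r ∈ range (n + 1), L'' r) ∧
    (FTb m b x d n (n + ∑ r ∈ range (n + 1), L r) L (I, K)
      = GB m b x d n L'' (∑ r ∈ range (n + 1), L'' r) I K) := by
  have hcn : c ≤ n := hc ▸ cIdx_le n L I
  have hiffI : ∀ t, t < n → (pos L t < I ↔ t < c) := by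
    intro t ht; rw [hc]; exact cIdx_iff L I t ht
  have hnotex : ∀ t, t < n → I ≤ pos L t → I + K ≤ pos L t := by
    intro t ht h1
    push_neg at hallb
    exact hallb t ht h1
  have hf : ∀ t, c ≤ t → t < n → I + K ≤ pos L t := by
    intro t hct ht
    exact hnotex t ht (le_of_not_gt (fun hlt => by have := (hiffI t ht).1 hlt; omega))
  -- I is at least the number of entries before the c-th x
  have hIge : (∑ r ∈ range c, L r) + c ≤ I := by
    rcases Nat.eq_zero_or_pos c with h0 | h0
    · simp [h0]
    · obtain ⟨c', rfl⟩ : ∃ c', c = c' + 1 := ⟨c - 1, by omega⟩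
      have := (hiffI c' (by omega)).2 (by omega)
      unfold pos at this
      omega
  have hIKle : I + K ≤ (∑ r ∈ range (c + 1), L r) + c := by
    rcases Nat.lt_or_ge c n with hlt | hge
    · have := hf c le_rfl hlt
      unfold pos at this
      omega
    · have hceq : c = n := le_antisymm hcn hge
      subst hceq
      unfold pos at *
      omega
  have hKLc : K ≤ L c := by
    rw [Finset.sum_range_succ] at hIKle
    omega
  have hrecon : ∀ r, L'' r + (if r = c then K else 0) = L r := by
    intro r
    rw [hL'']
    by_cases h : r = c
    · subst h; simp only [if_pos]; omega
    · simp [h]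
  have htr'' : ∀ r, n + 1 ≤ r → L'' r = 0 := by
    intro r hr
    rw [hL'']
    simp [hLt r hr]
  have hsumL : ∀ T, c < T → (∑ r ∈ range T, L'' r) + K = ∑ r ∈ range T, L r := by
    intro T hT
    have : ∑ r ∈ range T, L r = ∑ r ∈ range T, (L'' r + (if r = c then K else 0)) :=
      Finset.sum_congr rfl (fun r _ => (hrecon r).symm)
    rw [this, Finset.sum_add_distrib, Finset.sum_ite_eq' (range T) c (fun _ => K),
      if_pos (mem_range.2 hT)]
  have hsum : (∑ r ∈ range (n + 1), L'' r) + K = ∑ r ∈ range (n + 1), L r :=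
    hsumL (n + 1) (by omega)
  have hposlt : ∀ t, t < c → pos L'' t = pos L t := by
    intro t ht
    unfold pos
    have : ∑ r ∈ range (t + 1), L'' r = ∑ r ∈ range (t + 1), L r := by
      apply Finset.sum_congr rfl
      intro r hr
      simp only [mem_range] at hr
      have : r ≠ c := by omega
      rw [hL'']; simp [this]
    omega
  have hposge : ∀ t, c ≤ t → pos L'' t + K = pos L t := by
    intro t ht
    unfold pos
    have := hsumL (t + 1) (by omega)
    omega
  have hiff'' : ∀ t, t < n → (pos L'' t < I ↔ t < c) := by
    intro t ht
    constructor
    · intro hp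
      by_contra hcon
      push_neg at hcon
      have h1 := hposge t hcon
      have h2 := hf t hcon ht
      omega
    · intro htc
      rw [hposlt t htc]
      exact (hiffI t ht).2 htc
  have hc'' : cIdx n L'' I = c := cIdx_eq L'' I hiff'' hcn
  have hIle : I ≤ n + ∑ r ∈ range (n + 1), L'' r := by omega
  refine ⟨hrecon, htr'', hsum, hc'', hIle, ?_⟩
  -- the value identity
  unfold FTb GB
  rw [if_pos ⟨hguard, hallb⟩, dif_pos hIle]
  unfold FTbody
  rw [sgn_sum_Dd hiffI hcn, sgn_sum_Dd hiff'' hcn]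
  congr 1
  apply m_congr (F := fun k v => m k v) (h := by omega)
  intro j hj
  simp only [Prod.fst, Prod.snd] at hj ⊢
  rw [Function.update_apply]
  simp only [Fin.mk.injEq]
  rcases Nat.lt_trichotomy j I with hjI | hjI | hjI
  · have h1 : ¬ j = I := by omega
    rw [if_pos hjI, if_neg h1, if_pos hjI]
    by_cases hex : ∃ t, t < n ∧ j = pos L t
    · obtain ⟨t, htn, rfl⟩ := hex
      have htc : t < c := (hiffI t htn).1 hjI
      rw [wd_pos b L x htn, ← hposlt t htc, wd_pos b L'' x htn]
    · rw [wd_eq_b b L x (fun t ht hne => hex ⟨t, ht, hne⟩)]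
      rw [wd_eq_b b L'' x ?_]
      intro t ht hne
      rcases Nat.lt_or_ge t c with htc | htc
      · exact hex ⟨t, ht, by rw [hne, hposlt t htc]⟩
      · have h1 := hposge t htc
        have h2 := hf t htc ht
        omega
  · rw [if_neg (by omega : ¬ j < I), if_pos hjI, if_pos hjI]
    congr 1
    funext t
    apply wd_eq_b
    intro s hs hne
    apply hallb
    exact ⟨s, hs, by omega, by omega⟩
  · have h2 : ¬ j < I := by omega
    have h3 : ¬ j = I := by omega
    rw [if_neg h2, if_neg h3, if_neg h3, if_neg h2, if_neg h3]
    by_cases hex : ∃ t, t < n ∧ j - 1 = pos L'' t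
    · obtain ⟨t, htn, hjt⟩ := hex
      have htc : c ≤ t := by
        by_contra hcon
        push_neg at hcon
        have := hposlt t hcon
        have := (hiffI t htn).2 hcon
        omega
      have h1 := hposge t htc
      have hKey : j + K - 1 = pos L t := by omega
      rw [hKey, wd_pos b L x htn, hjt, wd_pos b L'' x htn]
    · rw [wd_eq_b b L'' x (fun t ht hne => hex ⟨t, ht, hne⟩)]
      rw [wd_eq_b b L x ?_]
      intro s hs hne
      have hge : I ≤ pos L s := by omega
      have hsc : c ≤ s := by
        by_contra hcon
        push_neg at hcon
        have := (hiffI s hs).2 hcon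
        omega
      have := hposge s hsc
      exact hex ⟨s, hs, by omega⟩

end Terms

section ClaimA

open Finset

variable {R C : Type*} [CommRing R] [AddCommGroup C] [Module R C]
variable (m : ∀ k : ℕ, MultilinearMap R (fun _ : Fin k => C) C)
variable (b : C) (x : ℕ → C) (d : ℕ → ℤ) (n : ℕ)

lemma FTbody_eq_zero_of_K {N : ℕ} (hN : ∀ k, N ≤ k → m k = 0) {M I K : ℕ} (L : ℕ → ℕ)
    (hKN : N ≤ K) (hIK : I + K ≤ M) : FTbody m b x d n M L (I, K) = 0 := by
  unfold FTbody
  rw [MultilinearMap.map_coord_zero (i := (⟨I, by omega⟩ : Fin (M - (I, K).2 + 1)))]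
  · rw [smul_zero]
  · simp only [lt_self_iff_false, if_false, if_true]
    rw [hN K hKN]
    exact MultilinearMap.zero_apply _

lemma FTbody_eq_zero_of_M {N : ℕ} (hN : ∀ k, N ≤ k → m k = 0) {M : ℕ} (L : ℕ → ℕ) (p : ℕ × ℕ)
    (hM : N ≤ M - p.2 + 1) : FTbody m b x d n M L p = 0 := by
  unfold FTbody
  rw [hN _ hM, MultilinearMap.zero_apply, smul_zero]

lemma GB_eq_zero_of_K {N : ℕ} (hN : ∀ k, N ≤ k → m k = 0) (L'' : ℕ → ℕ) (S'' s K : ℕ)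
    (hKN : N ≤ K) : GB m b x d n L'' S'' s K = 0 := by
  unfold GB
  split
  · have h0 : ((m K) fun _ => b) = 0 := by rw [hN K hKN]; exact MultilinearMap.zero_apply _
    rw [h0, MultilinearMap.map_update_zero, smul_zero]
  · rfl

lemma GB_eq_zero_of_M {N : ℕ} (hN : ∀ k, N ≤ k → m k = 0) (L'' : ℕ → ℕ) (S'' s K : ℕ)
    (hM : N ≤ n + S'' + 1) : GB m b x d n L'' S'' s K = 0 := by
  unfold GB
  split
  · rw [hN _ hM, MultilinearMap.zero_apply, smul_zero]
  · rfl

/-- reverse construction for Claim A -/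
lemma corrA_rev (L'' : ℕ → ℕ) (hLt : ∀ r, n + 1 ≤ r → L'' r = 0) (s K : ℕ)
    (hs : s ≤ n + ∑ r ∈ range (n + 1), L'' r)
    (c' : ℕ) (hc' : c' = cIdx n L'' s)
    (L : ℕ → ℕ) (hL : L = fun r => L'' r + (if r = c' then K else 0)) :
    (∀ r, n + 1 ≤ r → L r = 0) ∧
    (∑ r ∈ range (n + 1), L r = (∑ r ∈ range (n + 1), L'' r) + K) ∧
    (s + K ≤ n + ∑ r ∈ range (n + 1), L r) ∧
    (¬ ∃ t, t < n ∧ s ≤ pos L t ∧ pos L t < s + K) ∧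
    (cIdx n L s = c') ∧
    (∀ r, L r - (if r = c' then K else 0) = L'' r) := by
  have hcn : c' ≤ n := hc' ▸ cIdx_le n L'' s
  have hiff'' : ∀ t, t < n → (pos L'' t < s ↔ t < c') := by
    intro t ht; rw [hc']; exact cIdx_iff L'' s t ht
  have htr : ∀ r, n + 1 ≤ r → L r = 0 := by
    intro r hr
    rw [hL]; simp only
    rw [hLt r hr, if_neg (by omega)]
  have hsumT : ∀ T, c' < T → ∑ r ∈ range T, L r = (∑ r ∈ range T, L'' r) + K := by
    intro T hT
    rw [hL]
    rw [Finset.sum_add_distrib, Finset.sum_ite_eq' (range T) c' (fun _ => K),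
      if_pos (mem_range.2 hT)]
  have hsum : ∑ r ∈ range (n + 1), L r = (∑ r ∈ range (n + 1), L'' r) + K :=
    hsumT (n + 1) (by omega)
  have hposlt : ∀ t, t < c' → pos L t = pos L'' t := by
    intro t ht
    unfold pos
    have : ∑ r ∈ range (t + 1), L r = ∑ r ∈ range (t + 1), L'' r := by
      apply Finset.sum_congr rfl
      intro r hr
      simp only [mem_range] at hr
      rw [hL]; simp only
      rw [if_neg (by omega), Nat.add_zero]
    omega
  have hposge : ∀ t, c' ≤ t → pos L t = pos L'' t + K := by
    intro t ht
    unfold pos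
    have := hsumT (t + 1) (by omega)
    omega
  have hallb : ¬ ∃ t, t < n ∧ s ≤ pos L t ∧ pos L t < s + K := by
    rintro ⟨t, ht, h1, h2⟩
    rcases Nat.lt_or_ge t c' with htc | htc
    · have := hposlt t htc
      have := (hiff'' t ht).2 htc
      omega
    · have := hposge t htc
      have : ¬ pos L'' t < s := fun hh => by have := (hiff'' t ht).1 hh; omega
      omega
  have hcs : cIdx n L s = c' := by
    apply cIdx_eq L s ?_ hcn
    intro t ht
    constructor
    · intro hp
      by_contra hcon
      push_neg at hcon
      have h1 := hposge t hcon
      have : ¬ pos L'' t < s := fun hh => by have := (hiff'' t ht).1 hh; omega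
      omega
    · intro htc
      rw [hposlt t htc]
      have h1 := (hiff'' t ht).2 htc
      omega
  refine ⟨htr, hsum, by omega, hallb, hcs, ?_⟩
  intro r
  rw [hL]; simp only
  by_cases h : r = c'
  · subst h; simp only [if_pos]; omega
  · simp [h]

lemma factsA {N : ℕ} (hN : ∀ k, N ≤ k → m k = 0) (L : ℕ → ℕ) (I K : ℕ)
    (hne : FTb m b x d n (n + ∑ r ∈ range (n + 1), L r) L (I, K) ≠ 0) :
    (I + K ≤ n + ∑ r ∈ range (n + 1), L r) ∧
    (¬ ∃ t, t < n ∧ I ≤ pos L t ∧ pos L t < I + K) ∧ K < N := by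
  unfold FTb at hne
  by_cases hg : I + K ≤ n + ∑ r ∈ range (n + 1), L r
  · by_cases hbb : ∃ t, t < n ∧ I ≤ pos L t ∧ pos L t < I + K
    · exfalso
      apply hne
      rw [if_neg]
      intro hh
      exact hh.2 hbb
    · refine ⟨hg, hbb, ?_⟩
      by_contra hKN
      push_neg at hKN
      apply hne
      rw [if_pos (⟨hg, hbb⟩ : _ ∧ _)]
      exact FTbody_eq_zero_of_K m b x d n hN L hKN hg
  · exfalso
    apply hne
    rw [if_neg]
    intro hh
    exact hg hh.1

lemma factsGB {N : ℕ} (hN : ∀ k, N ≤ k → m k = 0) (L'' : ℕ → ℕ) (S'' s K : ℕ)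
    (hne : GB m b x d n L'' S'' s K ≠ 0) :
    s ≤ n + S'' ∧ K < N ∧ n + S'' + 1 < N := by
  refine ⟨?_, ?_, ?_⟩
  · by_contra h
    unfold GB at hne
    rw [dif_neg h] at hne
    exact hne rfl
  · by_contra h
    push_neg at h
    exact hne (GB_eq_zero_of_K m b x d n hN L'' S'' s K h)
  · by_contra h
    push_neg at h
    exact hne (GB_eq_zero_of_M m b x d n hN L'' S'' s K (by omega))

lemma claimA (N B B' : ℕ) (hN : ∀ k, N ≤ k → m k = 0)
    (hMCs : ∑ K ∈ range N, m K (fun _ : Fin K => b) = 0)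
    (hB : 2 * N ≤ B) (hB' : N ≤ B') :
    ∑ e ∈ (Fintype.piFinset fun _ : Fin (n + 1) => range B) ×ˢ (range B' ×ˢ range B'),
      FTb m b x d n (n + ∑ r ∈ range (n + 1), lext e.1 r) (lext e.1) e.2 = 0 := by
  classical
  rw [← Finset.sum_filter_ne_zero]
  have key : ∑ e ∈ ((Fintype.piFinset fun _ : Fin (n + 1) => range B) ×ˢ
        (range B' ×ˢ range B')).filter (fun e =>
          FTb m b x d n (n + ∑ r ∈ range (n + 1), lext e.1 r) (lext e.1) e.2 ≠ 0),
      FTb m b x d n (n + ∑ r ∈ range (n + 1), lext e.1 r) (lext e.1) e.2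
      = ∑ e ∈ ((Fintype.piFinset fun _ : Fin (n + 1) => range B) ×ˢ
        (range B' ×ˢ range N)).filter (fun e =>
          GB m b x d n (lext e.1) (∑ r ∈ range (n + 1), lext e.1 r) e.2.1 e.2.2 ≠ 0),
      GB m b x d n (lext e.1) (∑ r ∈ range (n + 1), lext e.1 r) e.2.1 e.2.2 := by
    apply Finset.sum_nbij'
      (i := fun e => ((fun r : Fin (n + 1) =>
          lext e.1 r.1 - (if r.1 = cIdx n (lext e.1) e.2.1 then e.2.2 else 0)), e.2))
      (j := fun e => ((fun r : Fin (n + 1) =>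
          lext e.1 r.1 + (if r.1 = cIdx n (lext e.1) e.2.1 then e.2.2 else 0)), e.2))
    · -- forward membership
      intro a ha
      simp only [mem_filter, mem_product, Fintype.mem_piFinset, mem_range] at ha ⊢
      obtain ⟨⟨hbox, hI, hK⟩, hne0⟩ := ha
      rw [← Prod.mk.eta (p := a.2)] at hne0
      obtain ⟨hg, hbb, hKN⟩ := factsA m b x d n hN (lext a.1) a.2.1 a.2.2 hne0
      have hcorr := corrA m b x d n (lext a.1) (fun r hr => lext_eq_zero a.1 hr) a.2.1 a.2.2
        hg hbb _ rfl _ rfl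
      have hlx : lext (fun r : Fin (n + 1) =>
          lext a.1 r.1 - (if r.1 = cIdx n (lext a.1) a.2.1 then a.2.2 else 0))
          = fun r => lext a.1 r - (if r = cIdx n (lext a.1) a.2.1 then a.2.2 else 0) :=
        lext_of_trunc _ hcorr.2.1
      refine ⟨⟨fun r => ?_, hI, hKN⟩, ?_⟩
      · have h1 := hbox r
        have h2 : lext a.1 r.1 = a.1 r := lext_val a.1 r
        omega
      · rw [hlx, ← hcorr.2.2.2.2.2, ← Prod.mk.eta (p := a.2)]
        exact hne0
    · -- backward membership
      intro a ha
      simp only [mem_filter, mem_product, Fintype.mem_piFinset, mem_range] at ha ⊢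
      obtain ⟨⟨hbox, hs', hK⟩, hne0⟩ := ha
      obtain ⟨hsle, hKN, hSN⟩ := factsGB m b x d n hN (lext a.1)
        (∑ r ∈ range (n + 1), lext a.1 r) a.2.1 a.2.2 hne0
      have hrev := corrA_rev n (lext a.1) (fun r hr => lext_eq_zero a.1 hr) a.2.1 a.2.2
        hsle _ rfl _ rfl
      have hlx : lext (fun r : Fin (n + 1) =>
          lext a.1 r.1 + (if r.1 = cIdx n (lext a.1) a.2.1 then a.2.2 else 0))
          = fun r => lext a.1 r + (if r = cIdx n (lext a.1) a.2.1 then a.2.2 else 0) :=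
        lext_of_trunc _ hrev.1
      have hLr : ∀ r : Fin (n + 1), lext a.1 r.1 ≤ ∑ r ∈ range (n + 1), lext a.1 r := by
        intro r
        apply Finset.single_le_sum (f := fun r => lext a.1 r) (fun _ _ => Nat.zero_le _)
        exact mem_range.2 r.2
      refine ⟨⟨fun r => ?_, hs', lt_of_lt_of_le hKN hB'⟩, ?_⟩
      · have := hLr r
        have h2 : (if r.1 = cIdx n (lext a.1) a.2.1 then a.2.2 else 0) ≤ a.2.2 := by
          split <;> omega
        have h3 : ∑ r ∈ range (n + 1), lext a.1 r < N := by omega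
        have h4 := hLr r
        omega
      · -- FTb of the image is nonzero
        have hcorr := corrA m b x d n
          (fun r => lext a.1 r + (if r = cIdx n (lext a.1) a.2.1 then a.2.2 else 0))
          hrev.1 a.2.1 a.2.2 (hrev.2.1 ▸ hrev.2.2.1) hrev.2.2.2.1 _ rfl _ rfl
        rw [hlx, ← Prod.mk.eta (p := a.2)]
        rw [hcorr.2.2.2.2.2]
        have harg : (fun r => (lext a.1 r + (if r = cIdx n (lext a.1) a.2.1 then a.2.2 else 0))
              - (if r = cIdx n (fun r => lext a.1 r +
                  (if r = cIdx n (lext a.1) a.2.1 then a.2.2 else 0)) a.2.1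
                 then a.2.2 else 0)) = lext a.1 := by
          funext r
          rw [hrev.2.2.2.2.1]
          exact hrev.2.2.2.2.2 r
        rw [harg]
        exact hne0
    · -- left inverse
      intro a ha
      simp only [mem_filter, mem_product, Fintype.mem_piFinset, mem_range] at ha
      obtain ⟨⟨hbox, hI, hK⟩, hne0⟩ := ha
      rw [← Prod.mk.eta (p := a.2)] at hne0
      obtain ⟨hg, hbb, hKN⟩ := factsA m b x d n hN (lext a.1) a.2.1 a.2.2 hne0
      have hcorr := corrA m b x d n (lext a.1) (fun r hr => lext_eq_zero a.1 hr) a.2.1 a.2.2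
        hg hbb _ rfl _ rfl
      have hlx : lext (fun r : Fin (n + 1) =>
          lext a.1 r.1 - (if r.1 = cIdx n (lext a.1) a.2.1 then a.2.2 else 0))
          = fun r => lext a.1 r - (if r = cIdx n (lext a.1) a.2.1 then a.2.2 else 0) :=
        lext_of_trunc _ hcorr.2.1
      simp only
      rw [Prod.ext_iff]
      refine ⟨?_, rfl⟩
      funext r
      simp only [hlx, hcorr.2.2.2.1]
      rw [hcorr.1 r.1]
      exact lext_val a.1 r
    · -- right inverse
      intro a ha
      simp only [mem_filter, mem_product, Fintype.mem_piFinset, mem_range] at ha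
      obtain ⟨⟨hbox, hs', hK⟩, hne0⟩ := ha
      obtain ⟨hsle, hKN, hSN⟩ := factsGB m b x d n hN (lext a.1)
        (∑ r ∈ range (n + 1), lext a.1 r) a.2.1 a.2.2 hne0
      have hrev := corrA_rev n (lext a.1) (fun r hr => lext_eq_zero a.1 hr) a.2.1 a.2.2
        hsle _ rfl _ rfl
      have hlx : lext (fun r : Fin (n + 1) =>
          lext a.1 r.1 + (if r.1 = cIdx n (lext a.1) a.2.1 then a.2.2 else 0))
          = fun r => lext a.1 r + (if r = cIdx n (lext a.1) a.2.1 then a.2.2 else 0) :=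
        lext_of_trunc _ hrev.1
      simp only
      rw [Prod.ext_iff]
      refine ⟨?_, rfl⟩
      funext r
      simp only [hlx, hrev.2.2.2.2.1]
      rw [hrev.2.2.2.2.2 r.1]
      exact lext_val a.1 r
    · -- value equality
      intro a ha
      simp only [mem_filter, mem_product, Fintype.mem_piFinset, mem_range] at ha
      obtain ⟨⟨hbox, hI, hK⟩, hne0⟩ := ha
      rw [← Prod.mk.eta (p := a.2)] at hne0 ⊢
      obtain ⟨hg, hbb, hKN⟩ := factsA m b x d n hN (lext a.1) a.2.1 a.2.2 hne0
      have hcorr := corrA m b x d n (lext a.1) (fun r hr => lext_eq_zero a.1 hr) a.2.1 a.2.2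
        hg hbb _ rfl _ rfl
      have hlx : lext (fun r : Fin (n + 1) =>
          lext a.1 r.1 - (if r.1 = cIdx n (lext a.1) a.2.1 then a.2.2 else 0))
          = fun r => lext a.1 r - (if r = cIdx n (lext a.1) a.2.1 then a.2.2 else 0) :=
        lext_of_trunc _ hcorr.2.1
      simp only [hlx]
      exact hcorr.2.2.2.2.2
  rw [key, Finset.sum_filter_ne_zero, Finset.sum_product]
  apply Finset.sum_eq_zero
  intro L'' _
  rw [Finset.sum_product]
  apply Finset.sum_eq_zero
  intro s _
  by_cases hs : s ≤ n + ∑ r ∈ range (n + 1), lext L'' r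
  · have hterm : ∀ K ∈ range N,
        GB m b x d n (lext L'') (∑ r ∈ range (n + 1), lext L'' r) s K
        = sgn ((s : ℤ) + ∑ j ∈ Finset.range s, Dd d n (lext L'') j) •
          m (n + (∑ r ∈ range (n + 1), lext L'' r) + 1) (Function.update
            (fun j : Fin (n + (∑ r ∈ range (n + 1), lext L'' r) + 1) =>
              if (j : ℕ) < s then wd b n (lext L'') x (j : ℕ)
              else if (j : ℕ) = s then 0
              else wd b n (lext L'') x ((j : ℕ) - 1))
            ⟨s, by omega⟩ (m K (fun _ => b))) := by
      intro K _
      unfold GB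
      rw [dif_pos hs]
    rw [Finset.sum_congr rfl hterm, ← Finset.smul_sum, ← MultilinearMap.map_update_sum,
      hMCs, MultilinearMap.map_update_zero, smul_zero]
  · apply Finset.sum_eq_zero
    intro K _
    unfold GB
    rw [dif_neg hs]

end ClaimA

section ClaimBDefs

open Finset

variable {R C : Type*} [CommRing R] [AddCommGroup C] [Module R C]
variable (m : ∀ k : ℕ, MultilinearMap R (fun _ : Fin k => C) C)
variable (b : C) (x : ℕ → C) (d : ℕ → ℤ) (n : ℕ)

/-- join of outer and inner gap-vectors -/
def JLf (i k₂ : ℕ) (l l' : ℕ → ℕ) : ℕ → ℕ := fun r =>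
  if r < i then l r
  else if r = i then l i + l' 0
  else if r < i + k₂ then l' (r - i)
  else if r = i + k₂ then l' k₂ + l (i + 1)
  else l (r - k₂ + 1)

def extlf (i k₂ : ℕ) (L : ℕ → ℕ) (I K : ℕ) : ℕ → ℕ := fun r =>
  if r < i then L r
  else if r = i then I - (i + ∑ r' ∈ Finset.range i, L r')
  else if r = i + 1 then pos L (i + k₂) - (I + K)
  else L (r + k₂ - 1)

def extlf' (i k₂ : ℕ) (L : ℕ → ℕ) (I K : ℕ) : ℕ → ℕ := fun u =>
  if u = 0 then pos L i - I
  else if u < k₂ then L (i + u)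
  else if u = k₂ then (I + K) - (pos L (i + k₂ - 1) + 1)
  else 0

/-- slot-zeroed outer input vector -/
def Yz (i k₂ : ℕ) : ℕ → C := fun t =>
  if t < i then x t else if t = i then 0 else x (t + k₂ - 1)

/-- the config term -/
noncomputable def TC (i k₂ : ℕ) (l l' : ℕ → ℕ) : C :=
  if h : pos l i < (n - k₂ + 1) + ∑ r ∈ range (n - k₂ + 2), l r then
    sgn ((i : ℤ) + ∑ t ∈ range i, d t) •
      m ((n - k₂ + 1) + ∑ r ∈ range (n - k₂ + 2), l r)
        (Function.update
          (fun j : Fin ((n - k₂ + 1) + ∑ r ∈ range (n - k₂ + 2), l r) =>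
            wd b (n - k₂ + 1) l (Yz x i k₂) (j : ℕ))
          ⟨pos l i, h⟩
          (m (k₂ + ∑ r ∈ range (k₂ + 1), l' r)
            (fun j : Fin (k₂ + ∑ r ∈ range (k₂ + 1), l' r) =>
              wd b k₂ l' (fun t => x (i + t)) (j : ℕ))))
  else 0

lemma sum_range_add' (f : ℕ → ℕ) (a c : ℕ) :
    ∑ j ∈ range (a + c), f j = (∑ j ∈ range a, f j) + ∑ j ∈ range c, f (a + j) := by
  induction c with
  | zero => simp
  | succ v ih =>
    rw [show a + (v + 1) = (a + v) + 1 by omega, Finset.sum_range_succ, ih,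
      Finset.sum_range_succ (f := fun j => f (a + j)) (n := v)]
    omega
  
lemma sum_range_split (f : ℕ → ℕ) (a c : ℕ) (h : a ≤ c) :
    ∑ j ∈ range c, f j = (∑ j ∈ range a, f j) + ∑ j ∈ range (c - a), f (a + j) := by
  have := sum_range_add' f a (c - a)
  rw [show a + (c - a) = c by omega] at this
  exact this

lemma sum_range_mono (f : ℕ → ℕ) {a c : ℕ} (h : a ≤ c) :
    ∑ j ∈ range a, f j ≤ ∑ j ∈ range c, f j := by
  apply Finset.sum_le_sum_of_subset
  intro r hr
  simp only [mem_range] at *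
  omega

section JLsums

variable (i k₂ : ℕ) (l l' : ℕ → ℕ)

lemma JL_S1 (T : ℕ) (hT : T ≤ i) :
    ∑ r ∈ range T, JLf i k₂ l l' r = ∑ r ∈ range T, l r := by
  apply Finset.sum_congr rfl
  intro r hr
  simp only [mem_range] at hr
  unfold JLf
  rw [if_pos (by omega)]

lemma JL_S2 (hk₂ : 1 ≤ k₂) : ∀ u, 1 ≤ u → u ≤ k₂ →
    ∑ r ∈ range (i + u), JLf i k₂ l l' r
      = (∑ r ∈ range (i + 1), l r) + ∑ r ∈ range u, l' r := by
  intro u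
  induction u with
  | zero => omega
  | succ v ih =>
    intro _ hle
    rcases Nat.eq_zero_or_pos v with hv | hv
    · subst hv
      rw [show i + 1 = i + 1 from rfl, Finset.sum_range_succ, JL_S1 i k₂ l l' i le_rfl,
        Finset.sum_range_succ, Finset.sum_range_succ]
      unfold JLf
      rw [if_neg (by omega), if_pos rfl]
      simp [Finset.sum_range_succ]
      omega
    · have hih := ih hv (by omega)
      rw [show i + (v + 1) = (i + v) + 1 by omega, Finset.sum_range_succ, hih,
        Finset.sum_range_succ]
      unfold JLf
      rw [if_neg (by omega), if_neg (by omega), if_pos (by omega)]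
      have hvv : i + v - i = v := by omega
      rw [hvv, Finset.sum_range_succ (f := l') (n := v)]
      omega

lemma JL_S3 (hk₂ : 1 ≤ k₂) : ∀ u,
    ∑ r ∈ range (i + k₂ + u + 1), JLf i k₂ l l' r
      = (∑ r ∈ range (i + u + 2), l r) + ∑ r ∈ range (k₂ + 1), l' r := by
  intro u
  induction u with
  | zero =>
    rw [Finset.sum_range_succ, JL_S2 i k₂ l l' hk₂ k₂ hk₂ le_rfl]
    unfold JLf
    rw [if_neg (by omega), if_neg (by omega), if_neg (by omega), if_pos rfl]
    rw [show i + 0 + 2 = (i + 1) + 1 by omega, Finset.sum_range_succ (f := l) (n := i + 1),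
      Finset.sum_range_succ (f := l') (n := k₂)]
    omega
  | succ v ih =>
    rw [show i + k₂ + (v + 1) + 1 = (i + k₂ + v + 1) + 1 by omega, Finset.sum_range_succ, ih]
    unfold JLf
    rw [if_neg (by omega), if_neg (by omega), if_neg (by omega), if_neg (by omega)]
    rw [show i + k₂ + v + 1 - k₂ + 1 = (i + v + 2) by omega]
    rw [show i + (v + 1) + 2 = (i + v + 2) + 1 by omega,
      Finset.sum_range_succ (f := l) (n := i + v + 2)]
    omega

lemma JL_P1 (t : ℕ) (ht : t < i) : pos (JLf i k₂ l l') t = pos l t := by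
  unfold pos
  rw [JL_S1 i k₂ l l' (t + 1) (by omega)]

lemma JL_P2 (hk₂ : 1 ≤ k₂) (u : ℕ) (hu : u < k₂) :
    pos (JLf i k₂ l l') (i + u) = pos l i + pos l' u := by
  unfold pos
  rw [show i + u + 1 = i + (u + 1) by omega, JL_S2 i k₂ l l' hk₂ (u + 1) (by omega) (by omega)]
  omega

lemma JL_P3 (hk₂ : 1 ≤ k₂) (u : ℕ) :
    pos (JLf i k₂ l l') (i + k₂ + u) + 1
      = pos l (i + 1 + u) + (k₂ + ∑ r ∈ range (k₂ + 1), l' r) := by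
  unfold pos
  rw [JL_S3 i k₂ l l' hk₂ u]
  rw [show i + 1 + u + 1 = i + u + 2 by omega]
  omega

lemma JL_C1 (hik : i + k₂ ≤ n) (hlt : ∀ r, n - k₂ + 2 ≤ r → l r = 0) :
    ∀ r, n + 1 ≤ r → JLf i k₂ l l' r = 0 := by
  intro r hr
  unfold JLf
  rw [if_neg (by omega), if_neg (by omega), if_neg (by omega), if_neg (by omega)]
  exact hlt _ (by omega)

lemma JL_C2 (hk₂ : 1 ≤ k₂) (hik : i + k₂ ≤ n) :
    ∑ r ∈ range (n + 1), JLf i k₂ l l' r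
      = (∑ r ∈ range (n - k₂ + 2), l r) + ∑ r ∈ range (k₂ + 1), l' r := by
  have := JL_S3 i k₂ l l' hk₂ (n - i - k₂)
  rw [show i + k₂ + (n - i - k₂) + 1 = n + 1 by omega] at this
  rw [show i + (n - i - k₂) + 2 = n - k₂ + 2 by omega] at this
  exact this

end JLsums

end ClaimBDefs

section CorrB

open Finset

variable {R C : Type*} [CommRing R] [AddCommGroup C] [Module R C]
variable (m : ∀ k : ℕ, MultilinearMap R (fun _ : Fin k => C) C)
variable (b : C) (x : ℕ → C) (d : ℕ → ℤ) (n : ℕ)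

lemma corrB (i k₂ : ℕ) (hk₂ : 1 ≤ k₂) (hik : i + k₂ ≤ n)
    (l l' : ℕ → ℕ) (htl : ∀ r, n - k₂ + 2 ≤ r → l r = 0) (htl' : ∀ r, k₂ + 1 ≤ r → l' r = 0) :
    (∀ r, n + 1 ≤ r → JLf i k₂ l l' r = 0) ∧
    (cIdx n (JLf i k₂ l l') (pos l i) = i) ∧
    (cIdx n (JLf i k₂ l l') (pos l i + (k₂ + ∑ r ∈ range (k₂ + 1), l' r)) = i + k₂) ∧
    (pos l i + (k₂ + ∑ r ∈ range (k₂ + 1), l' r)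
        ≤ n + ∑ r ∈ range (n + 1), JLf i k₂ l l' r) ∧
    (∃ t, t < n ∧ pos l i ≤ pos (JLf i k₂ l l') t ∧
        pos (JLf i k₂ l l') t < pos l i + (k₂ + ∑ r ∈ range (k₂ + 1), l' r)) ∧
    (∀ r, extlf i k₂ (JLf i k₂ l l') (pos l i) (k₂ + ∑ r ∈ range (k₂ + 1), l' r) r = l r) ∧
    (∀ u, extlf' i k₂ (JLf i k₂ l l') (pos l i) (k₂ + ∑ r ∈ range (k₂ + 1), l' r) u = l' u) ∧
    (FTx m b x d n (n + ∑ r ∈ range (n + 1), JLf i k₂ l l' r) (JLf i k₂ l l')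
        (pos l i, k₂ + ∑ r ∈ range (k₂ + 1), l' r) = TC m b x d n i k₂ l l') := by
  have hC1 : ∀ r, n + 1 ≤ r → JLf i k₂ l l' r = 0 := JL_C1 n i k₂ l l' hik htl
  have hC2 : ∑ r ∈ range (n + 1), JLf i k₂ l l' r
      = (∑ r ∈ range (n - k₂ + 2), l r) + ∑ r ∈ range (k₂ + 1), l' r :=
    JL_C2 n i k₂ l l' hk₂ hik
  have hposu : ∀ u, u < k₂ → pos l' u < k₂ + ∑ r ∈ range (k₂ + 1), l' r := by
    intro u hu
    have h1 : ∑ r ∈ range (u + 1), l' r ≤ ∑ r ∈ range (k₂ + 1), l' r :=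
      sum_range_mono l' (by omega)
    unfold pos
    omega
  have ha : ∀ t, t < i → pos (JLf i k₂ l l') t < pos l i := by
    intro t ht
    rw [JL_P1 i k₂ l l' t ht]
    exact pos_lt_pos (by omega)
  have hbmid : ∀ u, u < k₂ → pos l i ≤ pos (JLf i k₂ l l') (i + u) ∧
      pos (JLf i k₂ l l') (i + u) < pos l i + (k₂ + ∑ r ∈ range (k₂ + 1), l' r) := by
    intro u hu
    rw [JL_P2 i k₂ l l' hk₂ u hu]
    have := hposu u hu
    omega
  have hcend : ∀ u, pos l i + (k₂ + ∑ r ∈ range (k₂ + 1), l' r)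
      ≤ pos (JLf i k₂ l l') (i + k₂ + u) := by
    intro u
    have h3 := JL_P3 i k₂ l l' hk₂ u
    have h4 : pos l i < pos l (i + 1 + u) := pos_lt_pos (by omega)
    omega
  have hiffI : ∀ t, t < n → (pos (JLf i k₂ l l') t < pos l i ↔ t < i) := by
    intro t ht
    constructor
    · intro hp
      by_contra hcon
      push_neg at hcon
      rcases Nat.lt_or_ge t (i + k₂) with h1 | h1
      · obtain ⟨u, rfl⟩ : ∃ u, t = i + u := ⟨t - i, by omega⟩
        have := (hbmid u (by omega)).1
        omega
      · obtain ⟨u, rfl⟩ : ∃ u, t = i + k₂ + u := ⟨t - i - k₂, by omega⟩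
        have := hcend u
        omega
    · exact ha t
  have hiffIK : ∀ t, t < n →
      (pos (JLf i k₂ l l') t < pos l i + (k₂ + ∑ r ∈ range (k₂ + 1), l' r) ↔ t < i + k₂) := by
    intro t ht
    constructor
    · intro hp
      by_contra hcon
      push_neg at hcon
      obtain ⟨u, rfl⟩ : ∃ u, t = i + k₂ + u := ⟨t - i - k₂, by omega⟩
      have := hcend u
      omega
    · intro hcon
      rcases Nat.lt_or_ge t i with h1 | h1
      · have := ha t h1
        omega
      · obtain ⟨u, rfl⟩ : ∃ u, t = i + u := ⟨t - i, by omega⟩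
        exact (hbmid u (by omega)).2
  have hcI : cIdx n (JLf i k₂ l l') (pos l i) = i := cIdx_eq _ _ hiffI (by omega)
  have hcIK : cIdx n (JLf i k₂ l l') (pos l i + (k₂ + ∑ r ∈ range (k₂ + 1), l' r)) = i + k₂ :=
    cIdx_eq _ _ hiffIK (by omega)
  have hIbound : pos l i ≤ (∑ r ∈ range (n - k₂ + 2), l r) + i := by
    have h1 : ∑ r ∈ range (i + 1), l r ≤ ∑ r ∈ range (n - k₂ + 2), l r :=
      sum_range_mono l (by omega)
    unfold pos
    omega
  have hguard : pos l i + (k₂ + ∑ r ∈ range (k₂ + 1), l' r)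
      ≤ n + ∑ r ∈ range (n + 1), JLf i k₂ l l' r := by omega
  have hex : ∃ t, t < n ∧ pos l i ≤ pos (JLf i k₂ l l') t ∧
      pos (JLf i k₂ l l') t < pos l i + (k₂ + ∑ r ∈ range (k₂ + 1), l' r) := by
    refine ⟨i, by omega, ?_⟩
    have := hbmid 0 (by omega)
    simp only [Nat.add_zero] at this
    exact this
  have hreconl : ∀ r,
      extlf i k₂ (JLf i k₂ l l') (pos l i) (k₂ + ∑ r ∈ range (k₂ + 1), l' r) r = l r := by
    intro r
    unfold extlf
    rcases Nat.lt_trichotomy r i with hr | hr | hr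
    · rw [if_pos hr]
      unfold JLf
      rw [if_pos hr]
    · rw [hr]
      rw [if_neg (by omega), if_pos rfl]
      have hs1 : ∑ r' ∈ range i, JLf i k₂ l l' r' = ∑ r' ∈ range i, l r' :=
        JL_S1 i k₂ l l' i le_rfl
      have h2 : pos l i = (∑ r' ∈ range i, l r') + l i + i := by
        unfold pos
        rw [Finset.sum_range_succ]
      omega
    · by_cases hr1 : r = i + 1
      · rw [hr1]
        rw [if_neg (by omega), if_neg (by omega), if_pos rfl]
        have h3 := JL_P3 i k₂ l l' hk₂ 0
        simp only [Nat.add_zero] at h3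
        have h4 : pos l (i + 1) = (∑ r' ∈ range (i + 1), l r') + l (i + 1) + (i + 1) := by
          unfold pos
          rw [Finset.sum_range_succ]
        have h5 : pos l (i + 1 + 0) = pos l (i + 1) := by rw [Nat.add_zero]
        have h6 : pos l i = (∑ r' ∈ range (i + 1), l r') + i := rfl
        omega
      · rw [if_neg (by omega), if_neg (by omega), if_neg hr1]
        unfold JLf
        rw [if_neg (by omega), if_neg (by omega), if_neg (by omega), if_neg (by omega)]
        congr 1
        omega
  have hreconl' : ∀ u,
      extlf' i k₂ (JLf i k₂ l l') (pos l i) (k₂ + ∑ r ∈ range (k₂ + 1), l' r) u = l' u := by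
    intro u
    unfold extlf'
    rcases Nat.eq_zero_or_pos u with hu | hu
    · subst hu
      rw [if_pos rfl]
      have h2 := JL_P2 i k₂ l l' hk₂ 0 (by omega)
      simp only [Nat.add_zero] at h2
      have h3 : pos l' 0 = l' 0 := by
        unfold pos
        rw [Finset.sum_range_one]
        omega
      omega
    · rcases Nat.lt_or_ge u k₂ with hu2 | hu2
      · rw [if_neg (by omega), if_pos hu2]
        unfold JLf
        rw [if_neg (by omega), if_neg (by omega), if_pos (by omega)]
        congr 1
        omega
      · rcases Nat.eq_or_lt_of_le hu2 with hu3 | hu3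
        · rw [← hu3]
          rw [if_neg (by omega), if_neg (by omega), if_pos rfl]
          have h2 := JL_P2 i k₂ l l' hk₂ (k₂ - 1) (by omega)
          rw [show i + (k₂ - 1) = i + k₂ - 1 by omega] at h2
          have h4 : pos l' (k₂ - 1) + l' k₂ + 1 = k₂ + ∑ r ∈ range (k₂ + 1), l' r := by
            unfold pos
            rw [show k₂ - 1 + 1 = k₂ by omega, Finset.sum_range_succ (f := l') (n := k₂)]
            omega
          omega
        · rw [if_neg (by omega), if_neg (by omega), if_neg (by omega)]
          exact (htl' u (by omega)).symm
  refine ⟨hC1, hcI, hcIK, hguard, hex, hreconl, hreconl', ?_⟩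
  have hpos : pos l i < (n - k₂ + 1) + ∑ r ∈ range (n - k₂ + 2), l r := by omega
  unfold FTx TC
  rw [if_pos ⟨hguard, hex⟩, dif_pos hpos]
  unfold FTbody
  rw [sgn_sum_Dd hiffI (by omega)]
  congr 1
  apply m_congr (F := fun k v => m k v) (h := by omega)
  intro j hj
  rw [Function.update_apply]
  simp only [Fin.mk.injEq]
  rcases Nat.lt_trichotomy j (pos l i) with hjI | hjI | hjI
  · rw [if_pos hjI, if_neg (by omega : ¬ j = pos l i)]
    by_cases hex2 : ∃ t, t < n - k₂ + 1 ∧ j = pos l t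
    · obtain ⟨t, htk, rfl⟩ := hex2
      have hti : t < i := by
        by_contra hcon
        push_neg at hcon
        have := pos_le_pos (L := l) hcon
        omega
      have hLHS : wd b n (JLf i k₂ l l') x (pos l t) = x t := by
        rw [← JL_P1 i k₂ l l' t hti]
        exact wd_pos b _ x (by omega)
      rw [hLHS, wd_pos b l (Yz x i k₂) htk]
      unfold Yz
      rw [if_pos hti]
    · rw [wd_eq_b b l (Yz x i k₂) (fun t ht hne => hex2 ⟨t, ht, hne⟩)]
      apply wd_eq_b
      intro s hs hne
      rcases Nat.lt_or_ge s i with hsi | hsi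
      · rw [JL_P1 i k₂ l l' s hsi] at hne
        exact hex2 ⟨s, by omega, hne⟩
      · have h1 : pos (JLf i k₂ l l') i ≤ pos (JLf i k₂ l l') s := pos_le_pos hsi
        have h2 := (hbmid 0 (by omega)).1
        simp only [Nat.add_zero] at h2
        omega
  · rw [if_neg (by omega), if_pos hjI, if_pos hjI]
    congr 1
    funext t
    have htt : (t : ℕ) < k₂ + ∑ r ∈ range (k₂ + 1), l' r := t.2
    by_cases hex2 : ∃ u, u < k₂ ∧ (t : ℕ) = pos l' u
    · obtain ⟨u, hu, htu⟩ := hex2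
      rw [htu, ← JL_P2 i k₂ l l' hk₂ u hu, wd_pos b _ x (by omega),
        wd_pos b l' (fun t => x (i + t)) hu]
    · rw [wd_eq_b b l' (fun t => x (i + t)) (fun u hu hne => hex2 ⟨u, hu, hne⟩)]
      apply wd_eq_b
      intro s hs hne
      rcases Nat.lt_or_ge s i with hsi | hsi
      · have := ha s hsi
        omega
      · rcases Nat.lt_or_ge s (i + k₂) with hsk | hsk
        · obtain ⟨u, rfl⟩ : ∃ u, s = i + u := ⟨s - i, by omega⟩
          rw [JL_P2 i k₂ l l' hk₂ u (by omega)] at hne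
          exact hex2 ⟨u, by omega, by omega⟩
        · obtain ⟨u, rfl⟩ : ∃ u, s = i + k₂ + u := ⟨s - i - k₂, by omega⟩
          have := hcend u
          omega
  · rw [if_neg (by omega), if_neg (by omega), if_neg (by omega : ¬ j = pos l i)]
    by_cases hex2 : ∃ t, t < n - k₂ + 1 ∧ j = pos l t
    · obtain ⟨t, htk, rfl⟩ := hex2
      have hti : i < t := by
        by_contra hcon
        push_neg at hcon
        have := pos_le_pos (L := l) hcon
        omega
      obtain ⟨u, rfl⟩ : ∃ u, t = i + 1 + u := ⟨t - i - 1, by omega⟩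
      have h3 := JL_P3 i k₂ l l' hk₂ u
      rw [show pos l (i + 1 + u) + (k₂ + ∑ r ∈ range (k₂ + 1), l' r) - 1
          = pos (JLf i k₂ l l') (i + k₂ + u) by omega]
      rw [wd_pos b _ x (by omega), wd_pos b l (Yz x i k₂) htk]
      unfold Yz
      rw [if_neg (by omega), if_neg (by omega)]
      congr 1
      omega
    · rw [wd_eq_b b l (Yz x i k₂) (fun t ht hne => hex2 ⟨t, ht, hne⟩)]
      apply wd_eq_b
      intro s hs hne
      rcases Nat.lt_or_ge s i with hsi | hsi
      · have := ha s hsi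
        omega
      · rcases Nat.lt_or_ge s (i + k₂) with hsk | hsk
        · obtain ⟨u, rfl⟩ : ∃ u, s = i + u := ⟨s - i, by omega⟩
          have := (hbmid u (by omega)).2
          omega
        · obtain ⟨u, rfl⟩ : ∃ u, s = i + k₂ + u := ⟨s - i - k₂, by omega⟩
          have h3 := JL_P3 i k₂ l l' hk₂ u
          have hj2 : j = pos l (i + 1 + u) := by omega
          exact hex2 ⟨i + 1 + u, by omega, hj2⟩

end CorrB

section CorrBRev

open Finset

variable (n : ℕ)

lemma corrB_rev (L : ℕ → ℕ) (htL : ∀ r, n + 1 ≤ r → L r = 0) (I K : ℕ)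
    (hguard : I + K ≤ n + ∑ r ∈ range (n + 1), L r)
    (hex : ∃ t, t < n ∧ I ≤ pos L t ∧ pos L t < I + K)
    (i k₂ : ℕ) (hcI : cIdx n L I = i) (hcIK : cIdx n L (I + K) = i + k₂) :
    (1 ≤ k₂) ∧ (i + k₂ ≤ n) ∧
    (∀ r, n - k₂ + 2 ≤ r → extlf i k₂ L I K r = 0) ∧
    (∀ u, k₂ + 1 ≤ u → extlf' i k₂ L I K u = 0) ∧
    (∀ r, JLf i k₂ (extlf i k₂ L I K) (extlf' i k₂ L I K) r = L r) ∧
    (pos (extlf i k₂ L I K) i = I) ∧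
    (k₂ + ∑ r ∈ range (k₂ + 1), extlf' i k₂ L I K r = K) ∧
    (∀ r, extlf i k₂ L I K r ≤ n + ∑ r ∈ range (n + 1), L r) ∧
    (∀ u, extlf' i k₂ L I K u ≤ n + ∑ r ∈ range (n + 1), L r) := by
  have hiffI : ∀ t, t < n → (pos L t < I ↔ t < i) := by
    intro t ht; rw [← hcI]; exact cIdx_iff L I t ht
  have hiffIK : ∀ t, t < n → (pos L t < I + K ↔ t < i + k₂) := by
    intro t ht; rw [← hcIK]; exact cIdx_iff L (I + K) t ht
  have hik : i + k₂ ≤ n := hcIK ▸ cIdx_le n L (I + K)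
  have hk₂ : 1 ≤ k₂ := by
    obtain ⟨t0, ht0, h1, h2⟩ := hex
    have ha := (hiffI t0 ht0)
    have hb := (hiffIK t0 ht0).1 h2
    omega
  have hin : i < n := by omega
  have f1 : (∑ r ∈ range i, L r) + i ≤ I := by
    rcases Nat.eq_zero_or_pos i with h0 | h0
    · simp [h0]
    · obtain ⟨c', rfl⟩ : ∃ c', i = c' + 1 := ⟨i - 1, by omega⟩
      have := (hiffI c' (by omega)).2 (by omega)
      unfold pos at this
      omega
  have f2 : I ≤ pos L i := by
    have := hiffI i hin
    omega
  have f3 : pos L (i + k₂ - 1) < I + K := by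
    have h1 : i + k₂ - 1 < n := by omega
    exact (hiffIK (i + k₂ - 1) h1).2 (by omega)
  have f4 : I + K ≤ pos L (i + k₂) := by
    rcases Nat.lt_or_ge (i + k₂) n with h1 | h1
    · have := hiffIK (i + k₂) h1
      omega
    · have h2 : i + k₂ = n := by omega
      rw [h2]
      unfold pos
      omega
  have f5 : pos L i ≤ pos L (i + k₂ - 1) := pos_le_pos (by omega)
  have hposik : pos L (i + k₂) = pos L (i + k₂ - 1) + L (i + k₂) + 1 := by
    have e1 : pos L (i + k₂) = (∑ r ∈ range (i + k₂ + 1), L r) + (i + k₂) := rfl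
    have e2 : pos L (i + k₂ - 1) = (∑ r ∈ range (i + k₂ - 1 + 1), L r) + (i + k₂ - 1) := rfl
    have e3 : i + k₂ - 1 + 1 = i + k₂ := by omega
    rw [e3] at e2
    rw [e1, e2, Finset.sum_range_succ]
    omega
  have hposi : pos L i = (∑ r ∈ range i, L r) + L i + i := by
    have e1 : pos L i = (∑ r ∈ range (i + 1), L r) + i := rfl
    rw [e1, Finset.sum_range_succ]
  have htrl : ∀ r, n - k₂ + 2 ≤ r → extlf i k₂ L I K r = 0 := by
    intro r hr
    unfold extlf
    rw [if_neg (by omega), if_neg (by omega), if_neg (by omega)]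
    exact htL _ (by omega)
  have htrl' : ∀ u, k₂ + 1 ≤ u → extlf' i k₂ L I K u = 0 := by
    intro u hu
    unfold extlf'
    rw [if_neg (by omega), if_neg (by omega), if_neg (by omega)]
  have hsum_i : ∑ r ∈ range i, extlf i k₂ L I K r = ∑ r ∈ range i, L r := by
    apply Finset.sum_congr rfl
    intro r hr
    simp only [mem_range] at hr
    unfold extlf
    rw [if_pos hr]
  have hD3 : pos (extlf i k₂ L I K) i = I := by
    unfold pos
    rw [Finset.sum_range_succ, hsum_i]
    have : extlf i k₂ L I K i = I - (i + ∑ r' ∈ range i, L r') := by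
      unfold extlf
      rw [if_neg (by omega), if_pos rfl]
    rw [this]
    omega
  have hD4 : k₂ + ∑ r ∈ range (k₂ + 1), extlf' i k₂ L I K r = K := by
    rw [Finset.sum_range_succ, sum_range_split (extlf' i k₂ L I K) 1 k₂ hk₂]
    have e0 : extlf' i k₂ L I K 0 = pos L i - I := by
      unfold extlf'
      rw [if_pos rfl]
    have emid : ∑ j ∈ range (k₂ - 1), extlf' i k₂ L I K (1 + j)
        = ∑ j ∈ range (k₂ - 1), L (i + 1 + j) := by
      apply Finset.sum_congr rfl
      intro j hj
      simp only [mem_range] at hj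
      unfold extlf'
      rw [if_neg (by omega), if_pos (by omega)]
      congr 1
      omega
    have emid2 : ∑ r ∈ range (i + k₂), L r
        = (∑ r ∈ range (i + 1), L r) + ∑ j ∈ range (k₂ - 1), L (i + 1 + j) := by
      have := sum_range_split L (i + 1) (i + k₂) (by omega)
      rw [show i + k₂ - (i + 1) = k₂ - 1 by omega] at this
      exact this
    have ek : extlf' i k₂ L I K k₂ = (I + K) - (pos L (i + k₂ - 1) + 1) := by
      unfold extlf'
      rw [if_neg (by omega), if_neg (by omega), if_pos rfl]
    have ep1 : pos L (i + k₂ - 1) = (∑ r ∈ range (i + k₂), L r) + (i + k₂ - 1) := by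
      have e2 : pos L (i + k₂ - 1) = (∑ r ∈ range (i + k₂ - 1 + 1), L r) + (i + k₂ - 1) := rfl
      rw [show i + k₂ - 1 + 1 = i + k₂ by omega] at e2
      exact e2
    have ep2 : pos L i = (∑ r ∈ range (i + 1), L r) + i := rfl
    rw [Finset.sum_range_one, e0, emid, ek]
    omega
  have hD2 : ∀ r, JLf i k₂ (extlf i k₂ L I K) (extlf' i k₂ L I K) r = L r := by
    intro r
    unfold JLf
    rcases Nat.lt_trichotomy r i with hr | hr | hr
    · rw [if_pos hr]
      unfold extlf
      rw [if_pos hr]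
    · rw [hr, if_neg (by omega), if_pos rfl]
      have e1 : extlf i k₂ L I K i = I - (i + ∑ r' ∈ range i, L r') := by
        unfold extlf
        rw [if_neg (by omega), if_pos rfl]
      have e0 : extlf' i k₂ L I K 0 = pos L i - I := by
        unfold extlf'
        rw [if_pos rfl]
      rw [e1, e0]
      omega
    · rcases Nat.lt_trichotomy r (i + k₂) with hr2 | hr2 | hr2
      · rw [if_neg (by omega), if_neg (by omega), if_pos hr2]
        unfold extlf'
        rw [if_neg (by omega), if_pos (by omega)]
        congr 1
        omega
      · rw [hr2, if_neg (by omega), if_neg (by omega), if_neg (by omega), if_pos rfl]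
        have ek : extlf' i k₂ L I K k₂ = (I + K) - (pos L (i + k₂ - 1) + 1) := by
          unfold extlf'
          rw [if_neg (by omega), if_neg (by omega), if_pos rfl]
        have e1 : extlf i k₂ L I K (i + 1) = pos L (i + k₂) - (I + K) := by
          unfold extlf
          rw [if_neg (by omega), if_neg (by omega), if_pos rfl]
        rw [ek, e1]
        omega
      · rw [if_neg (by omega), if_neg (by omega), if_neg (by omega), if_neg (by omega)]
        unfold extlf
        rw [if_neg (by omega), if_neg (by omega), if_neg (by omega)]
        congr 1
        omega
  have hLB : ∀ u, L u ≤ ∑ r ∈ range (n + 1), L r := by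
    intro u
    rcases Nat.lt_or_ge u (n + 1) with h1 | h1
    · exact Finset.single_le_sum (f := L) (fun _ _ => Nat.zero_le _) (mem_range.2 h1)
    · rw [htL u h1]
      exact Nat.zero_le _
  have hposB : ∀ t, t ≤ n → pos L t ≤ n + ∑ r ∈ range (n + 1), L r := by
    intro t ht
    have : ∑ r ∈ range (t + 1), L r ≤ ∑ r ∈ range (n + 1), L r := sum_range_mono L (by omega)
    unfold pos
    omega
  refine ⟨hk₂, hik, htrl, htrl', hD2, hD3, hD4, ?_, ?_⟩
  · intro r
    have h1 := hLB r
    have h2 := hLB (r + k₂ - 1)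
    have h3 := hposB (i + k₂) (by omega)
    unfold extlf
    split_ifs <;> omega
  · intro u
    have h1 := hLB (i + u)
    have h2 := hposB i (by omega)
    unfold extlf'
    split_ifs <;> omega

end CorrBRev

section ClaimBMain

open Finset

variable {R C : Type*} [CommRing R] [AddCommGroup C] [Module R C]
variable (m : ∀ k : ℕ, MultilinearMap R (fun _ : Fin k => C) C)
variable (b : C) (x : ℕ → C) (d : ℕ → ℤ) (n : ℕ)

lemma factsX {N : ℕ} (hN : ∀ k, N ≤ k → m k = 0) (L : ℕ → ℕ) (I K : ℕ)
    (hne : FTx m b x d n (n + ∑ r ∈ range (n + 1), L r) L (I, K) ≠ 0) :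
    (I + K ≤ n + ∑ r ∈ range (n + 1), L r) ∧
    (∃ t, t < n ∧ I ≤ pos L t ∧ pos L t < I + K) ∧ K < N ∧
    (n + ∑ r ∈ range (n + 1), L r) - K + 1 < N := by
  unfold FTx at hne
  by_cases hg : I + K ≤ n + ∑ r ∈ range (n + 1), L r
  · by_cases hbb : ∃ t, t < n ∧ I ≤ pos L t ∧ pos L t < I + K
    · refine ⟨hg, hbb, ?_, ?_⟩
      · by_contra hKN
        push_neg at hKN
        apply hne
        rw [if_pos (⟨hg, hbb⟩ : _ ∧ _)]
        exact FTbody_eq_zero_of_K m b x d n hN L hKN hg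
      · by_contra hM
        push_neg at hM
        apply hne
        rw [if_pos (⟨hg, hbb⟩ : _ ∧ _)]
        exact FTbody_eq_zero_of_M m b x d n hN L (I, K) hM
    · exfalso
      apply hne
      rw [if_neg]
      intro hh
      exact hbb hh.2
  · exfalso
    apply hne
    rw [if_neg]
    intro hh
    exact hg hh.1

lemma factsTC {N : ℕ} (hN : ∀ k, N ≤ k → m k = 0) (i k₂ : ℕ) (l l' : ℕ → ℕ)
    (hne : TC m b x d n i k₂ l l' ≠ 0) :
    (pos l i < (n - k₂ + 1) + ∑ r ∈ range (n - k₂ + 2), l r) ∧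
    ((n - k₂ + 1) + ∑ r ∈ range (n - k₂ + 2), l r < N) ∧
    (k₂ + ∑ r ∈ range (k₂ + 1), l' r < N) := by
  unfold TC at hne
  by_cases hpos : pos l i < (n - k₂ + 1) + ∑ r ∈ range (n - k₂ + 2), l r
  · refine ⟨hpos, ?_, ?_⟩
    · by_contra hcon
      push_neg at hcon
      apply hne
      rw [dif_pos hpos, hN _ hcon, MultilinearMap.zero_apply, smul_zero]
    · by_contra hcon
      push_neg at hcon
      apply hne
      rw [dif_pos hpos]
      have h0 : (m (k₂ + ∑ r ∈ range (k₂ + 1), l' r))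
          (fun j : Fin (k₂ + ∑ r ∈ range (k₂ + 1), l' r) =>
            wd b k₂ l' (fun t => x (i + t)) (j : ℕ)) = 0 := by
        rw [hN _ hcon]
        exact MultilinearMap.zero_apply _
      rw [h0, MultilinearMap.map_update_zero, smul_zero]
  · exact absurd (dif_neg hpos) hne

lemma TCzero (B₁ : ℕ)
    (hMCsB : ∑ K ∈ range B₁, m K (fun _ : Fin K => b) = 0) (i k₂ : ℕ) (hk₂ : k₂ = 0) :
    ∑ e ∈ (Fintype.piFinset fun _ : Fin (n - k₂ + 2) => range B₁) ×ˢ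
        (Fintype.piFinset fun _ : Fin (k₂ + 1) => range B₁),
      TC m b x d n i k₂ (lext e.1) (lext e.2) = 0 := by
  subst hk₂
  rw [Finset.sum_product]
  apply Finset.sum_eq_zero
  intro l _
  by_cases hh : pos (lext l) i < (n - 0 + 1) + ∑ r ∈ range (n - 0 + 2), lext l r
  · have hterm : ∀ l' ∈ (Fintype.piFinset fun _ : Fin (0 + 1) => range B₁),
        TC m b x d n i 0 (lext l) (lext l')
        = sgn ((i : ℤ) + ∑ t ∈ range i, d t) •
          m ((n - 0 + 1) + ∑ r ∈ range (n - 0 + 2), lext l r)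
            (Function.update
              (fun j : Fin ((n - 0 + 1) + ∑ r ∈ range (n - 0 + 2), lext l r) =>
                wd b (n - 0 + 1) (lext l) (Yz x i 0) (j : ℕ))
              ⟨pos (lext l) i, hh⟩
              (m (0 + ∑ r ∈ range (0 + 1), lext l' r) (fun _ => b))) := by
      intro l' _
      unfold TC
      rw [dif_pos hh]
      have hv : (m (0 + ∑ r ∈ range (0 + 1), lext l' r))
          (fun j : Fin (0 + ∑ r ∈ range (0 + 1), lext l' r) =>
            wd b 0 (lext l') (fun t => x (i + t)) (j : ℕ))
          = (m (0 + ∑ r ∈ range (0 + 1), lext l' r)) (fun _ => b) := by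
        congr 1
      rw [hv]
    rw [Finset.sum_congr rfl hterm, ← Finset.smul_sum, ← MultilinearMap.map_update_sum]
    have hs : ∑ l' ∈ (Fintype.piFinset fun _ : Fin (0 + 1) => range B₁),
        m (0 + ∑ r ∈ range (0 + 1), lext l' r) (fun _ => b)
        = ∑ K ∈ range B₁, m K (fun _ : Fin K => b) := by
      apply Finset.sum_nbij' (i := fun l' => l' 0) (j := fun K => fun _ : Fin (0 + 1) => K)
      · intro a ha
        simp only [Fintype.mem_piFinset] at ha
        exact ha 0
      · intro a ha
        simp only [Fintype.mem_piFinset]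
        intro r
        exact ha
      · intro a _
        funext r
        refine congrArg a (Fin.ext ?_)
        have := r.isLt
        simp only [Fin.val_zero]
        omega
      · intro a _
        rfl
      · intro a _
        apply m_congr (F := fun k v => m k v)
          (h := by rw [Finset.sum_range_one, lext_apply a (by omega)]; simp)
        intro j hj
        rfl
    rw [hs, hMCsB, MultilinearMap.map_update_zero, smul_zero]
  · apply Finset.sum_eq_zero
    intro l' _
    unfold TC
    rw [dif_neg hh]

lemma claimB_main (N B B' B₁ : ℕ) (hN : ∀ k, N ≤ k → m k = 0)
    (hB : 2 * B₁ ≤ B) (hB' : n + N ≤ B') (hB₁ : 2 * N ≤ B₁)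
    (i k₂ : ℕ) (hk₂ : 1 ≤ k₂) (hik : i + k₂ ≤ n) :
    ∑ e ∈ (Fintype.piFinset fun _ : Fin (n - k₂ + 2) => range B₁) ×ˢ
        (Fintype.piFinset fun _ : Fin (k₂ + 1) => range B₁),
      TC m b x d n i k₂ (lext e.1) (lext e.2)
    = ∑ e ∈ ((Fintype.piFinset fun _ : Fin (n + 1) => range B) ×ˢ (range B' ×ˢ range B')).filter
        (fun e => (cIdx n (lext e.1) e.2.1 = i ∧
             cIdx n (lext e.1) (e.2.1 + e.2.2) = i + k₂) ∧
           FTx m b x d n (n + ∑ r ∈ range (n + 1), lext e.1 r) (lext e.1) e.2 ≠ 0),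
      FTx m b x d n (n + ∑ r ∈ range (n + 1), lext e.1 r) (lext e.1) e.2 := by
  classical
  rw [← Finset.sum_filter_ne_zero]
  apply Finset.sum_nbij'
    (i := fun e => ((fun r : Fin (n + 1) => JLf i k₂ (lext e.1) (lext e.2) r.1),
      (pos (lext e.1) i, k₂ + ∑ r ∈ range (k₂ + 1), lext e.2 r)))
    (j := fun e => ((fun r : Fin (n - k₂ + 2) => extlf i k₂ (lext e.1) e.2.1 e.2.2 r.1),
      (fun u : Fin (k₂ + 1) => extlf' i k₂ (lext e.1) e.2.1 e.2.2 u.1)))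
  · -- forward membership
    intro a ha
    simp only [mem_filter, mem_product, Fintype.mem_piFinset, mem_range] at ha ⊢
    obtain ⟨⟨hbox1, hbox2⟩, hne0⟩ := ha
    obtain ⟨hTpos, hTout, hTinn⟩ := factsTC m b x d n hN i k₂ (lext a.1) (lext a.2) hne0
    have hcorr := corrB m b x d n i k₂ hk₂ hik (lext a.1) (lext a.2)
      (fun r hr => lext_eq_zero a.1 hr) (fun r hr => lext_eq_zero a.2 hr)
    have hJLx : lext (fun r : Fin (n + 1) => JLf i k₂ (lext a.1) (lext a.2) r.1)
        = JLf i k₂ (lext a.1) (lext a.2) := lext_of_trunc _ hcorr.1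
    have hB₁pos : 0 < B₁ := lt_of_le_of_lt (Nat.zero_le _) (hbox1 ⟨0, by omega⟩)
    have hla : ∀ u, lext a.1 u < B₁ := by
      intro u
      unfold lext
      split
      · exact hbox1 _
      · exact hB₁pos
    have hla' : ∀ u, lext a.2 u < B₁ := by
      intro u
      unfold lext
      split
      · exact hbox2 _
      · exact hB₁pos
    refine ⟨⟨fun r => ?_, ?_, ?_⟩, ⟨?_, ?_⟩, ?_⟩
    · have h1 := hla r.1
      have h2 := hla i
      have h3 := hla (i + 1)
      have h4 := hla (r.1 - k₂ + 1)
      have h5 := hla' 0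
      have h6 := hla' k₂
      have h7 := hla' (r.1 - i)
      unfold JLf
      split_ifs <;> omega
    · have h1 : ∑ r ∈ range (i + 1), lext a.1 r ≤ ∑ r ∈ range (n - k₂ + 2), lext a.1 r :=
        sum_range_mono _ (by omega)
      have h2 : pos (lext a.1) i = (∑ r ∈ range (i + 1), lext a.1 r) + i := rfl
      omega
    · omega
    · rw [hJLx]
      exact hcorr.2.1
    · rw [hJLx]
      exact hcorr.2.2.1
    · rw [hJLx, hcorr.2.2.2.2.2.2.2]
      exact hne0
  · -- backward membership
    intro a ha
    simp only [mem_filter, mem_product, Fintype.mem_piFinset, mem_range] at ha ⊢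
    obtain ⟨⟨hbox, hI, hK⟩, ⟨hcI, hcIK⟩, hne0⟩ := ha
    rw [← Prod.mk.eta (p := a.2)] at hne0
    obtain ⟨hg, hexx, hKN, hMN⟩ := factsX m b x d n hN (lext a.1) a.2.1 a.2.2 hne0
    have hrev := corrB_rev n (lext a.1) (fun r hr => lext_eq_zero a.1 hr) a.2.1 a.2.2
      hg hexx i k₂ hcI hcIK
    have hMb : n + ∑ r ∈ range (n + 1), lext a.1 r < B₁ := by omega
    refine ⟨⟨fun r => ?_, fun u => ?_⟩, ?_⟩
    · exact lt_of_le_of_lt (hrev.2.2.2.2.2.2.2.1 r.1) hMb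
    · exact lt_of_le_of_lt (hrev.2.2.2.2.2.2.2.2 u.1) hMb
    · -- TC of the image is nonzero
      have hlxo : lext (fun r : Fin (n - k₂ + 2) => extlf i k₂ (lext a.1) a.2.1 a.2.2 r.1)
          = extlf i k₂ (lext a.1) a.2.1 a.2.2 := lext_of_trunc _ hrev.2.2.1
      have hlxi : lext (fun u : Fin (k₂ + 1) => extlf' i k₂ (lext a.1) a.2.1 a.2.2 u.1)
          = extlf' i k₂ (lext a.1) a.2.1 a.2.2 := lext_of_trunc _ hrev.2.2.2.1
      rw [hlxo, hlxi]
      have hcorr := corrB m b x d n i k₂ hk₂ hik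
        (extlf i k₂ (lext a.1) a.2.1 a.2.2) (extlf' i k₂ (lext a.1) a.2.1 a.2.2)
        hrev.2.2.1 hrev.2.2.2.1
      rw [← hcorr.2.2.2.2.2.2.2]
      have hfun : JLf i k₂ (extlf i k₂ (lext a.1) a.2.1 a.2.2)
          (extlf' i k₂ (lext a.1) a.2.1 a.2.2) = lext a.1 := funext hrev.2.2.2.2.1
      rw [hfun, hrev.2.2.2.2.2.1, hrev.2.2.2.2.2.2.1, Prod.mk.eta]
      exact (by rw [← Prod.mk.eta (p := a.2)]; exact hne0)
  · -- left inverse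
    intro a ha
    simp only [mem_filter, mem_product, Fintype.mem_piFinset, mem_range] at ha
    obtain ⟨⟨hbox1, hbox2⟩, hne0⟩ := ha
    have hcorr := corrB m b x d n i k₂ hk₂ hik (lext a.1) (lext a.2)
      (fun r hr => lext_eq_zero a.1 hr) (fun r hr => lext_eq_zero a.2 hr)
    have hJLx : lext (fun r : Fin (n + 1) => JLf i k₂ (lext a.1) (lext a.2) r.1)
        = JLf i k₂ (lext a.1) (lext a.2) := lext_of_trunc _ hcorr.1
    simp only
    rw [Prod.ext_iff]
    constructor
    · funext r
      simp only [hJLx]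
      rw [hcorr.2.2.2.2.2.1 r.1]
      exact lext_val a.1 r
    · funext u
      simp only [hJLx]
      rw [hcorr.2.2.2.2.2.2.1 u.1]
      exact lext_val a.2 u
  · -- right inverse
    intro a ha
    simp only [mem_filter, mem_product, Fintype.mem_piFinset, mem_range] at ha
    obtain ⟨⟨hbox, hI, hK⟩, ⟨hcI, hcIK⟩, hne0⟩ := ha
    rw [← Prod.mk.eta (p := a.2)] at hne0
    obtain ⟨hg, hexx, hKN, hMN⟩ := factsX m b x d n hN (lext a.1) a.2.1 a.2.2 hne0
    have hrev := corrB_rev n (lext a.1) (fun r hr => lext_eq_zero a.1 hr) a.2.1 a.2.2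
      hg hexx i k₂ hcI hcIK
    have hlxo : lext (fun r : Fin (n - k₂ + 2) => extlf i k₂ (lext a.1) a.2.1 a.2.2 r.1)
        = extlf i k₂ (lext a.1) a.2.1 a.2.2 := lext_of_trunc _ hrev.2.2.1
    have hlxi : lext (fun u : Fin (k₂ + 1) => extlf' i k₂ (lext a.1) a.2.1 a.2.2 u.1)
        = extlf' i k₂ (lext a.1) a.2.1 a.2.2 := lext_of_trunc _ hrev.2.2.2.1
    simp only
    rw [Prod.ext_iff]
    constructor
    · funext r
      simp only [hlxo, hlxi]
      rw [hrev.2.2.2.2.1 r.1]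
      exact lext_val a.1 r
    · simp only [hlxo, hlxi]
      rw [hrev.2.2.2.2.2.1, hrev.2.2.2.2.2.2.1, Prod.mk.eta]
  · -- value equality
    intro a ha
    simp only [mem_filter, mem_product, Fintype.mem_piFinset, mem_range] at ha
    obtain ⟨⟨hbox1, hbox2⟩, hne0⟩ := ha
    have hcorr := corrB m b x d n i k₂ hk₂ hik (lext a.1) (lext a.2)
      (fun r hr => lext_eq_zero a.1 hr) (fun r hr => lext_eq_zero a.2 hr)
    have hJLx : lext (fun r : Fin (n + 1) => JLf i k₂ (lext a.1) (lext a.2) r.1)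
        = JLf i k₂ (lext a.1) (lext a.2) := lext_of_trunc _ hcorr.1
    simp only [hJLx]
    exact hcorr.2.2.2.2.2.2.2.symm

end ClaimBMain

section Expand

open Finset

variable {R C : Type*} [CommRing R] [AddCommGroup C] [Module R C]
variable (m : ∀ k : ℕ, MultilinearMap R (fun _ : Fin k => C) C)
variable (b : C) (x : ℕ → C) (d : ℕ → ℤ) (n : ℕ)

/-- outer input vector with value `v` in slot `i` -/
def Yfm (i k₂ : ℕ) (v : C) : ℕ → C := fun t =>
  if t < i then x t else if t = i then v else x (t + k₂ - 1)

lemma expandEq (B₁ : ℕ) (i k₂ : ℕ) (hik : i + k₂ ≤ n)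
    (inner outer : C)
    (hinner : inner = ∑ l' ∈ Fintype.piFinset (fun _ : Fin (k₂ + 1) => range B₁),
        m (k₂ + ∑ r ∈ range (k₂ + 1), lext l' r)
          (fun j : Fin (k₂ + ∑ r ∈ range (k₂ + 1), lext l' r) =>
            wd b k₂ (lext l') (fun t => x (i + t)) j.1))
    (houter : outer = ∑ l ∈ Fintype.piFinset (fun _ : Fin (n - k₂ + 2) => range B₁),
        m ((n - k₂ + 1) + ∑ r ∈ range (n - k₂ + 2), lext l r)
          (fun j : Fin ((n - k₂ + 1) + ∑ r ∈ range (n - k₂ + 2), lext l r) =>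
            wd b (n - k₂ + 1) (lext l) (Yfm x i k₂ inner) j.1)) :
    sgn ((i : ℤ) + ∑ t ∈ range i, d t) • outer
      = ∑ e ∈ (Fintype.piFinset fun _ : Fin (n - k₂ + 2) => range B₁) ×ˢ
          (Fintype.piFinset fun _ : Fin (k₂ + 1) => range B₁),
        TC m b x d n i k₂ (lext e.1) (lext e.2) := by
  subst houter
  rw [Finset.sum_product, Finset.smul_sum]
  apply Finset.sum_congr rfl
  intro l _
  have hlt : pos (lext l) i < (n - k₂ + 1) + ∑ r ∈ range (n - k₂ + 2), lext l r := by
    have h1 : ∑ r ∈ range (i + 1), lext l r ≤ ∑ r ∈ range (n - k₂ + 2), lext l r :=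
      sum_range_mono _ (by omega)
    have h2 : pos (lext l) i = (∑ r ∈ range (i + 1), lext l r) + i := rfl
    omega
  have hupd : (fun j : Fin ((n - k₂ + 1) + ∑ r ∈ range (n - k₂ + 2), lext l r) =>
        wd b (n - k₂ + 1) (lext l) (Yfm x i k₂ inner) j.1)
      = Function.update
          (fun j : Fin ((n - k₂ + 1) + ∑ r ∈ range (n - k₂ + 2), lext l r) =>
            wd b (n - k₂ + 1) (lext l) (Yz x i k₂) j.1)
          ⟨pos (lext l) i, hlt⟩ inner := by
    funext j
    rw [Function.update_apply]
    by_cases hj : (j : ℕ) = pos (lext l) i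
    · rw [if_pos (Fin.ext hj : j = ⟨pos (lext l) i, hlt⟩), hj, wd_pos b (lext l) (Yfm x i k₂ inner) (by omega)]
      unfold Yfm
      rw [if_neg (by omega), if_pos rfl]
    · rw [if_neg (fun hh => hj (by rw [hh]) : ¬ j = ⟨pos (lext l) i, hlt⟩)]
      by_cases hex2 : ∃ t, t < n - k₂ + 1 ∧ (j : ℕ) = pos (lext l) t
      · obtain ⟨t, htk, hjt⟩ := hex2
        have hti : t ≠ i := by
          intro hcon
          exact hj (by rw [hjt, hcon])
        rw [hjt, wd_pos b (lext l) (Yfm x i k₂ inner) htk,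
          wd_pos b (lext l) (Yz x i k₂) htk]
        unfold Yfm Yz
        rcases Nat.lt_or_ge t i with h1 | h1
        · rw [if_pos h1, if_pos h1]
        · rw [if_neg (by omega), if_neg hti, if_neg (by omega), if_neg hti]
      · rw [wd_eq_b b (lext l) (Yfm x i k₂ inner) (fun t ht hne => hex2 ⟨t, ht, hne⟩),
          wd_eq_b b (lext l) (Yz x i k₂) (fun t ht hne => hex2 ⟨t, ht, hne⟩)]
  rw [hupd, hinner, MultilinearMap.map_update_sum, Finset.smul_sum]
  apply Finset.sum_congr rfl
  intro l' _
  unfold TC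
  rw [dif_pos hlt]

end Expand

end StrictAux

open StrictAux Finset

/-- The deformed operations `mₖ^{(b₀,…,bₖ)}` of the associated
strict category of a curved filtered A∞ category satisfy the A∞ relations.
(We formalize the algebra case, as the context allows: one object with a
bounding cochain `b`, so `b₀ = ⋯ = bₖ = b`.  The deformed operation is
`mbₖ(x₁,…,xₖ) = Σ_{ℓ₀,…,ℓₖ} m_{k+ℓ₀+⋯+ℓₖ}(b^{ℓ₀}, x₁, b^{ℓ₁}, …, xₖ, b^{ℓₖ})`;
in the interleaved input vector, the entry at position
`ℓ₀ + ⋯ + ℓ_t + t` is `x_t` and all other entries are `b`.) -/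
theorem deformed_operations_satisfy_AInfty
    {R C : Type*} [CommRing R] [AddCommGroup C] [Module R C]
    (G : ℤ → Submodule R C)
    (I : Ideal R)
    (m : ∀ k : ℕ, MultilinearMap R (fun _ : Fin k => C) C)
    (hrel : AInftyRel G (fun k v => m k v))
    (hmdeg : ∀ (k : ℕ) (d : Fin k → ℤ) (x : Fin k → C),
      (∀ i, x i ∈ G (d i)) → m k x ∈ G ((2 : ℤ) - k + ∑ i, d i))
    (hfin : ∃ N : ℕ, ∀ k, N ≤ k → m k = 0)
    (b : C)
    (hbdeg : b ∈ G 1)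
    (hbI : b ∈ I • (⊤ : Submodule R C))
    (hMC : (∑ᶠ k : ℕ, m k (fun _ => b)) = 0)
    (mb : ∀ k : ℕ, (Fin k → C) → C)
    (hmb : ∀ (k : ℕ) (x : ℕ → C),
      mb k (fun j : Fin k => x j.1) =
        ∑ᶠ (l : Fin (k + 1) → ℕ),
          m (k + ∑ i, l i) (fun j : Fin (k + ∑ i, l i) =>
            if h : ∃ t, t < k ∧ j.1 = (∑ i ∈ Finset.range (t + 1), lext l i) + t
            then x h.choose else b)) :
    AInftyRel G mb := by
  classical
  intro n d x hx
  obtain ⟨N, hN⟩ := hfin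
  obtain ⟨B₁, hB₁⟩ : ∃ t, t = 2 * N + 2 := ⟨_, rfl⟩
  obtain ⟨B, hB⟩ : ∃ t, t = 2 * B₁ := ⟨_, rfl⟩
  obtain ⟨B', hB'⟩ : ∃ t, t = n + (n + 1) * B + N + 1 := ⟨_, rfl⟩
  have hprodB : 0 ≤ (n + 1) * B := Nat.zero_le _
  -- generic expansion of mb into a finite box sum
  have hexp : ∀ (k : ℕ) (x' : ℕ → C), mb k (fun j : Fin k => x' j.1)
      = ∑ l ∈ Fintype.piFinset (fun _ : Fin (k + 1) => range B₁),
          m (k + ∑ r ∈ range (k + 1), lext l r)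
            (fun j : Fin (k + ∑ r ∈ range (k + 1), lext l r) => wd b k (lext l) x' j.1) := by
    intro k x'
    rw [hmb k x', finsum_box (P := B₁) _ ?_]
    · apply Finset.sum_congr rfl
      intro l _
      apply m_congr (F := fun k v => m k v) (h := by rw [sum_univ_lext])
      intro j hj
      rfl
    · rintro l ⟨r, hr⟩
      have h1 : l r ≤ ∑ i, l i :=
        Finset.single_le_sum (fun i _ => Nat.zero_le (l i)) (Finset.mem_univ r)
      rw [hN (k + ∑ i, l i) (by omega)]
      exact MultilinearMap.zero_apply _
  have hMCsN : ∑ K ∈ range N, m K (fun _ : Fin K => b) = 0 := by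
    rw [← finsum_nat (fun k => m k (fun _ : Fin k => b)) (P := N)
      (fun k hk => by
        show (m k) (fun _ => b) = 0
        rw [hN k hk]; exact MultilinearMap.zero_apply _)]
    exact hMC
  have hMCsB : ∑ K ∈ range B₁, m K (fun _ : Fin K => b) = 0 := by
    rw [← finsum_nat (fun k => m k (fun _ : Fin k => b)) (P := B₁)
      (fun k hk => by
        show (m k) (fun _ => b) = 0
        rw [hN k (by omega)]; exact MultilinearMap.zero_apply _)]
    exact hMC
  -- summed A∞ relations for the interleaved words
  have hrelsum : ∀ L : Fin (n + 1) → ℕ, (∀ r, L r < B) →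
      ∑ p ∈ range B' ×ˢ range B',
        FT m b x d n (n + ∑ r ∈ range (n + 1), lext L r) (lext L) p = 0 := by
    intro L hLB
    have hMB : n + (∑ r ∈ range (n + 1), lext L r) + 1 ≤ B' := by
      have h1 : ∀ r ∈ range (n + 1), lext L r ≤ B - 1 := by
        intro r _
        by_cases hr2 : r < n + 1
        · rw [lext_apply L hr2]
          have := hLB ⟨r, hr2⟩
          omega
        · rw [lext_eq_zero L (by omega)]
          omega
      have h2 : ∑ r ∈ range (n + 1), lext L r ≤ (range (n + 1)).card • (B - 1) :=
        Finset.sum_le_card_nsmul _ _ _ h1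
      simp only [card_range, smul_eq_mul] at h2
      have h3 : (n + 1) * (B - 1) ≤ (n + 1) * B := Nat.mul_le_mul_left _ (by omega)
      omega
    have h1 : ∑ p ∈ range ((n + ∑ r ∈ range (n + 1), lext L r) + 1) ×ˢ
          range ((n + ∑ r ∈ range (n + 1), lext L r) + 1),
        FT m b x d n (n + ∑ r ∈ range (n + 1), lext L r) (lext L) p = 0 :=
      hrel (n + ∑ r ∈ range (n + 1), lext L r) (Dd d n (lext L)) (wd b n (lext L) x)
        (wd_mem G b n (lext L) x d hx hbdeg)
    rw [← h1]
    apply (Finset.sum_subset ?_ ?_).symm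
    · exact Finset.product_subset_product
        (by intro a ha; simp only [mem_range] at *; omega)
        (by intro a ha; simp only [mem_range] at *; omega)
    · intro p hp hnp
      simp only [mem_product, mem_range] at hp hnp
      unfold FT
      rw [if_neg (by omega)]
  have hFTsum : ∑ e ∈ (Fintype.piFinset fun _ : Fin (n + 1) => range B) ×ˢ
        (range B' ×ˢ range B'),
      FT m b x d n (n + ∑ r ∈ range (n + 1), lext e.1 r) (lext e.1) e.2 = 0 := by
    rw [Finset.sum_product]
    apply Finset.sum_eq_zero
    intro L hL
    simp only [Fintype.mem_piFinset, mem_range] at hL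
    exact hrelsum L hL
  have hFTxsum : ∑ e ∈ (Fintype.piFinset fun _ : Fin (n + 1) => range B) ×ˢ
        (range B' ×ˢ range B'),
      FTx m b x d n (n + ∑ r ∈ range (n + 1), lext e.1 r) (lext e.1) e.2 = 0 := by
    have hsplit : ∑ e ∈ (Fintype.piFinset fun _ : Fin (n + 1) => range B) ×ˢ
          (range B' ×ˢ range B'),
        FT m b x d n (n + ∑ r ∈ range (n + 1), lext e.1 r) (lext e.1) e.2
        = (∑ e ∈ (Fintype.piFinset fun _ : Fin (n + 1) => range B) ×ˢ
            (range B' ×ˢ range B'),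
          FTx m b x d n (n + ∑ r ∈ range (n + 1), lext e.1 r) (lext e.1) e.2)
        + ∑ e ∈ (Fintype.piFinset fun _ : Fin (n + 1) => range B) ×ˢ
            (range B' ×ˢ range B'),
          FTb m b x d n (n + ∑ r ∈ range (n + 1), lext e.1 r) (lext e.1) e.2 := by
      rw [← Finset.sum_add_distrib]
      exact Finset.sum_congr rfl (fun e _ => FT_split m b x d n _ (lext e.1) e.2)
    have hA := claimA m b x d n N B B' hN hMCsN (by omega) (by omega)
    rw [hFTsum, hA, add_zero] at hsplit
    exact hsplit.symm
  -- fiberwise decomposition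
  have hmaps : ∀ e ∈ (Fintype.piFinset fun _ : Fin (n + 1) => range B) ×ˢ
        (range B' ×ˢ range B'),
      ((cIdx n (lext e.1) e.2.1,
        cIdx n (lext e.1) (e.2.1 + e.2.2) - cIdx n (lext e.1) e.2.1) : ℕ × ℕ)
        ∈ range (n + 1) ×ˢ range (n + 1) := by
    intro e _
    simp only [mem_product, mem_range]
    have h1 := cIdx_le n (lext e.1) e.2.1
    have h2 := cIdx_le n (lext e.1) (e.2.1 + e.2.2)
    omega
  have hfib := Finset.sum_fiberwise_of_maps_to hmaps
    (fun e => FTx m b x d n (n + ∑ r ∈ range (n + 1), lext e.1 r) (lext e.1) e.2)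
  -- per-fiber identification
  have hper : ∀ p ∈ range (n + 1) ×ˢ range (n + 1),
      (if p.1 + p.2 ≤ n then
        sgn ((p.1 : ℤ) + ∑ j ∈ Finset.range p.1, d j) •
          mb (n - p.2 + 1) (fun j : Fin (n - p.2 + 1) =>
            if j.1 < p.1 then x j.1
            else if j.1 = p.1 then mb p.2 (fun t : Fin p.2 => x (p.1 + t.1))
            else x (j.1 + p.2 - 1))
       else 0)
      = ∑ e ∈ ((Fintype.piFinset fun _ : Fin (n + 1) => range B) ×ˢ
            (range B' ×ˢ range B')).filter (fun e =>
          ((cIdx n (lext e.1) e.2.1,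
            cIdx n (lext e.1) (e.2.1 + e.2.2) - cIdx n (lext e.1) e.2.1) : ℕ × ℕ) = p),
        FTx m b x d n (n + ∑ r ∈ range (n + 1), lext e.1 r) (lext e.1) e.2 := by
    intro p hp
    by_cases hg : p.1 + p.2 ≤ n
    · -- expand the goal term
      rw [if_pos hg]
      have hgw : (fun j : Fin (n - p.2 + 1) =>
          if j.1 < p.1 then x j.1
          else if j.1 = p.1 then mb p.2 (fun t : Fin p.2 => x (p.1 + t.1))
          else x (j.1 + p.2 - 1))
          = fun j : Fin (n - p.2 + 1) =>
              Yfm x p.1 p.2 (mb p.2 (fun t : Fin p.2 => x (p.1 + t.1))) j.1 := rfl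
      rw [hgw, hexp (n - p.2 + 1) (Yfm x p.1 p.2 (mb p.2 (fun t : Fin p.2 => x (p.1 + t.1))))]
      rw [expandEq m b x d n B₁ p.1 p.2 hg
        (mb p.2 (fun t : Fin p.2 => x (p.1 + t.1))) _
        (hexp p.2 (fun t => x (p.1 + t))) rfl]
      rcases Nat.eq_zero_or_pos p.2 with hp2 | hp2
      · -- degenerate fiber: both sides vanish
        rw [TCzero m b x d n B₁ hMCsB p.1 p.2 hp2]
        symm
        apply Finset.sum_eq_zero
        intro e he
        simp only [mem_filter] at he
        by_contra hne
        rw [← Prod.mk.eta (p := e.2)] at hne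
        obtain ⟨hg', hexx, -, -⟩ := factsX m b x d n hN (lext e.1) e.2.1 e.2.2 hne
        obtain ⟨t, ht, h1, h2⟩ := hexx
        have hiffa := cIdx_iff (lext e.1) e.2.1 t ht
        have hiffb := cIdx_iff (lext e.1) (e.2.1 + e.2.2) t ht
        have h3 : cIdx n (lext e.1) e.2.1 ≤ t := by
          by_contra hcon
          push_neg at hcon
          have := hiffa.2 hcon
          omega
        have h4 : t < cIdx n (lext e.1) (e.2.1 + e.2.2) := hiffb.1 h2
        have h5 := he.2
        rw [Prod.ext_iff] at h5
        simp only at h5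
        omega
      · -- main fiber
        rw [claimB_main m b x d n N B B' B₁ hN (by omega) (by omega) (by omega) p.1 p.2
          hp2 hg]
        rw [← Finset.sum_filter_ne_zero (s := ((Fintype.piFinset fun _ : Fin (n + 1) =>
          range B) ×ˢ (range B' ×ˢ range B')).filter (fun e =>
            ((cIdx n (lext e.1) e.2.1,
              cIdx n (lext e.1) (e.2.1 + e.2.2) - cIdx n (lext e.1) e.2.1) : ℕ × ℕ) = p))]
        rw [Finset.filter_filter]
        apply Finset.sum_congr ?_ (fun _ _ => rfl)
        apply Finset.filter_congr
        intro e _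
        have hmono : cIdx n (lext e.1) e.2.1 ≤ cIdx n (lext e.1) (e.2.1 + e.2.2) :=
          cIdx_mono _ (by omega)
        constructor
        · rintro ⟨⟨h1, h2⟩, h3⟩
          refine ⟨?_, h3⟩
          rw [Prod.ext_iff]
          exact ⟨h1, by simp only; omega⟩
        · rintro ⟨h12, h3⟩
          rw [Prod.ext_iff] at h12
          simp only at h12
          exact ⟨⟨h12.1, by omega⟩, h3⟩
    · rw [if_neg hg]
      symm
      apply Finset.sum_eq_zero
      intro e he
      simp only [mem_filter] at he
      by_contra hne
      rw [← Prod.mk.eta (p := e.2)] at hne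
      obtain ⟨hg', hexx, -, -⟩ := factsX m b x d n hN (lext e.1) e.2.1 e.2.2 hne
      have h2 := cIdx_le n (lext e.1) (e.2.1 + e.2.2)
      have hmono : cIdx n (lext e.1) e.2.1 ≤ cIdx n (lext e.1) (e.2.1 + e.2.2) :=
        cIdx_mono _ (by omega)
      have h5 := he.2
      rw [Prod.ext_iff] at h5
      simp only at h5
      omega
  calc ∑ p ∈ Finset.range (n + 1) ×ˢ Finset.range (n + 1), _
      = ∑ p ∈ range (n + 1) ×ˢ range (n + 1),
          ∑ e ∈ ((Fintype.piFinset fun _ : Fin (n + 1) => range B) ×ˢ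
            (range B' ×ˢ range B')).filter (fun e =>
            ((cIdx n (lext e.1) e.2.1,
              cIdx n (lext e.1) (e.2.1 + e.2.2) - cIdx n (lext e.1) e.2.1) : ℕ × ℕ) = p),
          FTx m b x d n (n + ∑ r ∈ range (n + 1), lext e.1 r) (lext e.1) e.2 :=
        Finset.sum_congr rfl hper
    _ = 0 := by rw [hfib]; exact hFTxsum
end
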